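/- arXiv:math/9905114 — 6 statements merged into one kernel-verified Lean document; each statement's English description precedes it below -/
import Mathlib

section
/- Let F be a free filter on ℕ, viewed as a subset of the Cantor space 2^ℕ via characteristic functions. If F has the Baire property, then F is meager. (Equivalently: every nonprincipal filter, as a subset of 2^ℕ, is either meager or fails to have the Baire property.) -/
/-!
A free filter `F` is a tail set: changing finitely many coordinates of `x` does not affect
whether `x ∈ F`. Tail sets with the property of Baire obey a topological zero-one law: if such
a set is not meagre it is comeagre on some basic cylinder, and the finitely many coordinate flips
that move this cylinder around cover the whole space, so it is comeagre. But `F` cannot be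
comeagre, since the coordinatewise negation is a homeomorphism mapping `F` into its complement
(a set and its complement never both lie in a proper filter), whereas two comeagre sets meet.
-/

open Filter Set

/-- The subset of the Cantor space `ℕ → Bool` corresponding to a filter `F` on `ℕ`,
identifying a subset of `ℕ` with its characteristic function. -/
def filterSet (F : Filter ℕ) : Set (ℕ → Bool) :=
  {x | {n | x n = true} ∈ F}

def HasBaireProperty (S : Set (ℕ → Bool)) : Prop :=
  ∃ U M : Set (ℕ → Bool), IsOpen U ∧ IsMeagre M ∧ S = symmDiff U M

open Topology

section

variable {ι : Type*}

def xorHomeomorph (g : ι → Bool) : (ι → Bool) ≃ₜ (ι → Bool) where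
  toFun x i := xor (g i) (x i)
  invFun x i := xor (g i) (x i)
  left_inv x := by funext i; simp
  right_inv x := by funext i; simp
  continuous_toFun := continuous_pi fun i =>
    (continuous_of_discreteTopology (f := xor (g i))).comp (continuous_apply i)
  continuous_invFun := continuous_pi fun i =>
    (continuous_of_discreteTopology (f := xor (g i))).comp (continuous_apply i)

@[simp]
lemma xorHomeomorph_apply (g x : ι → Bool) (i : ι) :
    xorHomeomorph g x i = xor (g i) (x i) :=
  rfl

lemma xorHomeomorph_eventuallyEq {g : ι → Bool} (hg : ∀ᶠ i in cofinite, g i = false)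
    (x : ι → Bool) :
    xorHomeomorph g x =ᶠ[cofinite] x := by
  filter_upwards [hg] with i hi
  simp [hi]

lemma exists_finset_pi_singleton_subset {π : ι → Type*} [∀ i, TopologicalSpace (π i)]
    {U : Set (∀ i, π i)} (hU : IsOpen U) {y : ∀ i, π i} (hy : y ∈ U) :
    ∃ I : Finset ι, (I : Set ι).pi (fun i => {y i}) ⊆ U := by
  obtain ⟨I, u, hu, hIu⟩ := isOpen_pi_iff.mp hU y hy
  exact ⟨I, (pi_mono fun i hi => singleton_subset_iff.mpr (hu i hi).2).trans hIu⟩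

lemma BaireMeasurableSet.isMeagre_or_isMeagre_compl_of_cofinite_invariant [Countable ι]
    {S : Set (ι → Bool)} (hBM : BaireMeasurableSet S)
    (hS : ∀ x y, x =ᶠ[cofinite] y → x ∈ S → y ∈ S) : IsMeagre S ∨ IsMeagre Sᶜ := by
  classical
  obtain ⟨U, hU, hSU⟩ := hBM.residualEq_isOpen
  rcases U.eq_empty_or_nonempty with rfl | ⟨y, hy⟩
  · exact .inl (eventuallyEq_empty.mp hSU)
  right
  obtain ⟨I, hIU⟩ := exists_finset_pi_singleton_subset hU hy
  have hUS : IsMeagre (U \ S) := by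
    filter_upwards [eventuallyEq_set.mp hSU] with x hx hxUS
    exact hxUS.2 (hx.mpr hxUS.1)
  let flip (s : Finset ι) := xorHomeomorph fun i => decide (i ∈ s)
  refine (isMeagre_iUnion fun s => hUS.preimage_of_isOpenMap (flip s).continuous
    (flip s).isOpenMap).mono fun x (hx : x ∉ S) => ?_
  let s := I.filter fun i => x i ≠ y i
  have hflipU : flip s x ∈ U := hIU fun i hi => by
    by_cases hxy : x i = y i <;> simp_all [flip, s, Bool.eq_not_iff]
  have hs : ∀ᶠ i in cofinite, decide (i ∈ s) = false := by
    filter_upwards [s.finite_toSet.compl_mem_cofinite] with i hi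
    simpa using hi
  have hflipS : flip s x ∉ S := fun h => hx (hS _ _ (xorHomeomorph_eventuallyEq hs x) h)
  exact mem_iUnion.mpr ⟨s, hflipU, hflipS⟩

end

lemma exists_mem_and_apply_mem_of_mem_residual {X : Type*} [TopologicalSpace X] [BaireSpace X]
    [Nonempty X] {f : X → X} (hc : Continuous f) (ho : IsOpenMap f) {S : Set X}
    (hS : S ∈ residual X) : ∃ x ∈ S, f x ∈ S :=
  (dense_of_mem_residual (inter_mem hS (tendsto_residual_of_isOpenMap hc ho hS))).nonempty

lemma HasBaireProperty.baireMeasurableSet {S : Set (ℕ → Bool)} (hS : HasBaireProperty S) :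
    BaireMeasurableSet S := by
  obtain ⟨U, M, hU, hM, rfl⟩ := hS
  refine hU.baireMeasurableSet.congr (eventuallyEq_set.mpr ?_)
  filter_upwards [hM] with x (hx : x ∉ M)
  simp [mem_symmDiff, hx]

lemma mem_filterSet_of_eventuallyEq {F : Filter ℕ} (hfree : F ≤ cofinite) {x y : ℕ → Bool}
    (hxy : x =ᶠ[cofinite] y) (hx : x ∈ filterSet F) : y ∈ filterSet F := by
  filter_upwards [hx, hxy.filter_mono hfree] with n hn hn'
  rwa [← hn']

lemma notMem_filterSet_not {F : Filter ℕ} [F.NeBot] {x : ℕ → Bool} (hx : x ∈ filterSet F) :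
    (fun n => !x n) ∉ filterSet F := fun hnx => by
  obtain ⟨n, hn, hn'⟩ := (Eventually.and hx hnx).exists
  simp [hn] at hn'

/-- Every free (proper, containing all cofinite sets) filter on `ℕ` which, as a subset of
the Cantor space, has the Baire property is meager. -/
theorem free_filter_baireProperty_isMeagre (F : Filter ℕ) (hproper : F.NeBot)
    (hfree : F ≤ Filter.cofinite) (hBP : HasBaireProperty (filterSet F)) :
    IsMeagre (filterSet F) := by
  refine (hBP.baireMeasurableSet.isMeagre_or_isMeagre_compl_of_cofinite_invariant
    fun _ _ => mem_filterSet_of_eventuallyEq hfree).resolve_right fun hcompl => ?_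
  rw [IsMeagre, compl_compl] at hcompl
  let negate := xorHomeomorph fun _ : ℕ => true
  obtain ⟨x, hx, hnx⟩ :=
    exists_mem_and_apply_mem_of_mem_residual negate.continuous negate.isOpenMap hcompl
  exact notMem_filterSet_not hx (by convert hnx using 2 with n; simp [negate])
end

section
/- Let F be a free filter on ℕ, viewed as a subset of the Cantor space 2^ℕ via characteristic functions. If F is μ-measurable, then μ(F) = 0. (Equivalently: every nonprincipal filter, as a subset of 2^ℕ, either has measure zero or is nonmeasurable.) -/
/-!
Flipping finitely many bits does not change whether a set lies in a free filter, and it preserves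
the coin measure, so the restriction of `μ` to `A = filterSet F` is again invariant under single bit
flips. Such a finite measure halves its mass each time a cylinder is cut along one more coordinate,
so it agrees with a multiple of `μ` on cylinders, and `μ.restrict A = μ A • μ`. Evaluating at `A`
gives `μ A * μ A = μ A`, a zero-one law. Flipping all bits maps `A` onto a set of the same measure
that is disjoint from `A`, since a proper filter never contains both a set and its complement;
hence `μ A ≤ 1/2`, and so `μ A = 0`.
-/

open Filter Set MeasureTheory

/-- `μ` is the fair-coin product measure on the Cantor space: every cylinder determined by
finitely many coordinates has the expected measure `(1/2)^(number of coordinates)`. -/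
def IsCoinMeasure (μ : Measure (ℕ → Bool)) : Prop :=
  ∀ (s : Finset ℕ) (f : ℕ → Bool), μ {x | ∀ i ∈ s, x i = f i} = (2 : ENNReal)⁻¹ ^ s.card

section PointCylinder

variable {ι α : Type*}

def pointCylinder (s : Finset ι) (x : ι → α) : Set (ι → α) :=
  (s : Set ι).pi fun i => {x i}

def pointCylinders : Set (Set (ι → α)) :=
  {C | ∃ s x, pointCylinder s x = C}

theorem mem_pointCylinder {s : Finset ι} {x y : ι → α} :
    y ∈ pointCylinder s x ↔ ∀ i ∈ s, y i = x i :=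
  Iff.rfl

theorem pointCylinder_congr {s : Finset ι} {x y : ι → α} (h : ∀ i ∈ s, x i = y i) :
    pointCylinder s x = pointCylinder s y := by
  ext z
  simp only [mem_pointCylinder]
  exact forall₂_congr fun i hi => by rw [h i hi]

theorem pointCylinder_inter_pointCylinder [DecidableEq ι] (s t : Finset ι) (x : ι → α) :
    pointCylinder s x ∩ pointCylinder t x = pointCylinder (s ∪ t) x := by
  ext z
  simp [mem_pointCylinder, or_imp, forall_and]

theorem pointCylinder_insert [DecidableEq ι] (i : ι) (s : Finset ι) (x : ι → α) :
    pointCylinder (insert i s) x = {y | y i = x i} ∩ pointCylinder s x := by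
  rw [pointCylinder, Finset.coe_insert, insert_pi]
  rfl

theorem isPiSystem_pointCylinders : IsPiSystem (pointCylinders (ι := ι) (α := α)) := by
  classical
  rintro _ ⟨s, x, rfl⟩ _ ⟨t, y, rfl⟩ ⟨z, hzx, hzy⟩
  rw [pointCylinder_congr fun i hi => (hzx i hi).symm,
    pointCylinder_congr fun i hi => (hzy i hi).symm, pointCylinder_inter_pointCylinder]
  exact ⟨_, _, rfl⟩

variable [MeasurableSpace α] [MeasurableSingletonClass α]

theorem measurableSet_pointCylinder (s : Finset ι) (x : ι → α) :
    MeasurableSet (pointCylinder s x) :=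
  .pi s.countable_toSet fun i _ => measurableSet_singleton (x i)

theorem generateFrom_pointCylinders [Countable α] :
    MeasurableSpace.generateFrom (pointCylinders (ι := ι) (α := α)) = MeasurableSpace.pi := by
  refine le_antisymm (MeasurableSpace.generateFrom_le ?_) (iSup_le fun i => ?_)
  · rintro _ ⟨s, x, rfl⟩
    exact measurableSet_pointCylinder s x
  · refine Measurable.comap_le (@measurable_to_countable' _ _ _ _ (_) _ fun a => ?_)
    exact MeasurableSpace.measurableSet_generateFrom
      ⟨{i}, fun _ => a, by ext; simp [mem_pointCylinder]⟩

theorem MeasureTheory.Measure.ext_of_pointCylinder [Countable α] [Nonempty α]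
    {μ ν : Measure (ι → α)} [IsFiniteMeasure μ]
    (h : ∀ s x, μ (pointCylinder s x) = ν (pointCylinder s x)) : μ = ν := by
  inhabit α
  refine ext_of_generate_finite _ generateFrom_pointCylinders.symm isPiSystem_pointCylinders
    (fun _ ⟨s, x, hC⟩ => hC ▸ h s x) ?_
  simpa [pointCylinder] using h ∅ fun _ => default

end PointCylinder

section BitFlip

variable {ι : Type*}

def bitFlip (g x : ι → Bool) : ι → Bool :=
  fun i => xor (g i) (x i)

theorem bitFlip_bitFlip (g x : ι → Bool) : bitFlip g (bitFlip g x) = x :=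
  funext fun i => Bool.bne_self_left (g i) (x i)

theorem measurable_bitFlip (g : ι → Bool) : Measurable (bitFlip g) :=
  measurable_pi_iff.2 fun i => Measurable.of_discrete.comp (measurable_pi_apply i)

theorem measurableEmbedding_bitFlip (g : ι → Bool) : MeasurableEmbedding (bitFlip g) :=
  .of_measurable_inverse (measurable_bitFlip g)
    (by rw [Function.Involutive.surjective (bitFlip_bitFlip g) |>.range_eq]; exact .univ)
    (measurable_bitFlip g) (bitFlip_bitFlip g)

theorem preimage_bitFlip_pointCylinder (g : ι → Bool) (s : Finset ι) (x : ι → Bool) :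
    bitFlip g ⁻¹' pointCylinder s x = pointCylinder s (bitFlip g x) := by
  ext y
  simp only [mem_preimage, mem_pointCylinder, bitFlip]
  exact forall₂_congr fun i _ => by cases g i <;> cases x i <;> simp

variable [DecidableEq ι]

theorem two_pow_card_mul_measure_pointCylinder {ν : Measure (ι → Bool)}
    (hν : ∀ i, MeasurePreserving (bitFlip fun j => decide (j = i)) ν ν) (s : Finset ι)
    (x : ι → Bool) : 2 ^ s.card * ν (pointCylinder s x) = ν univ := by
  induction s using Finset.induction_on generalizing x with
  | empty => simp [pointCylinder]
  | insert i s hi ih =>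
    -- Flipping coordinate `i` swaps the two halves into which it cuts `pointCylinder s x`.
    set x' := bitFlip (fun j => decide (j = i)) x
    have hx' : ∀ j ∈ s, x' j = x j := fun j hj => by
      simp [x', bitFlip, ne_of_mem_of_not_mem hj hi]
    have hsplit : pointCylinder s x =
        pointCylinder (insert i s) x ∪ pointCylinder (insert i s) x' := by
      have hx'i : x' i = !x i := by simp [x', bitFlip]
      ext y
      simp only [pointCylinder_insert, pointCylinder_congr hx', ← union_inter_distrib_right,
        mem_inter_iff, mem_union, mem_ofPred_eq, hx'i]
      cases y i <;> cases x i <;> simp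
    have hdisj : Disjoint (pointCylinder (insert i s) x) (pointCylinder (insert i s) x') := by
      refine Set.disjoint_left.2 fun y hy hy' => ?_
      have := (hy i (Finset.mem_insert_self i s)).symm.trans (hy' i (Finset.mem_insert_self i s))
      simp [x', bitFlip] at this
    have hflip : ν (pointCylinder (insert i s) x') = ν (pointCylinder (insert i s) x) := by
      rw [← preimage_bitFlip_pointCylinder, (hν i).measure_preimage
        (measurableSet_pointCylinder _ _).nullMeasurableSet]
    rw [← ih x, hsplit, measure_union hdisj (measurableSet_pointCylinder _ _), hflip,
      Finset.card_insert_of_notMem hi, pow_succ, mul_assoc, two_mul]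

end BitFlip

namespace IsCoinMeasure

variable {μ : Measure (ℕ → Bool)}

theorem measure_pointCylinder (hμ : IsCoinMeasure μ) (s : Finset ℕ) (x : ℕ → Bool) :
    μ (pointCylinder s x) = 2⁻¹ ^ s.card :=
  hμ s x

theorem isProbabilityMeasure (hμ : IsCoinMeasure μ) : IsProbabilityMeasure μ :=
  ⟨by simpa [pointCylinder] using hμ.measure_pointCylinder ∅ fun _ => true⟩

theorem measurePreserving_bitFlip (hμ : IsCoinMeasure μ) (g : ℕ → Bool) :
    MeasurePreserving (bitFlip g) μ μ := by
  have := hμ.isProbabilityMeasure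
  refine ⟨measurable_bitFlip g, Measure.ext_of_pointCylinder fun s x => ?_⟩
  rw [Measure.map_apply (measurable_bitFlip g) (measurableSet_pointCylinder s x),
    preimage_bitFlip_pointCylinder, hμ.measure_pointCylinder, hμ.measure_pointCylinder]

theorem eq_smul_of_measurePreserving_bitFlip (hμ : IsCoinMeasure μ) {ν : Measure (ℕ → Bool)}
    [IsFiniteMeasure ν] (hν : ∀ i, MeasurePreserving (bitFlip fun j => decide (j = i)) ν ν) :
    ν = ν univ • μ := by
  refine Measure.ext_of_pointCylinder fun s x => ?_
  rw [Measure.smul_apply, smul_eq_mul, hμ.measure_pointCylinder, ← ENNReal.inv_pow,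
    ← two_pow_card_mul_measure_pointCylinder hν s x, mul_comm,
    ENNReal.inv_mul_cancel_left (by positivity) (by simp)]

end IsCoinMeasure

theorem preimage_bitFlip_filterSet {F : Filter ℕ} (hF : F ≤ cofinite) {g : ℕ → Bool}
    (hg : {n | g n}.Finite) : bitFlip g ⁻¹' filterSet F = filterSet F := by
  have hg' : ∀ᶠ n in F, g n = false := hF (mem_cofinite.2 (by simpa [compl_ofPred] using hg))
  ext x
  exact congr_sets (hg'.mono fun n hn => by simp [bitFlip, hn])

theorem disjoint_filterSet_preimage_bitFlip_true (F : Filter ℕ) [F.NeBot] :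
    Disjoint (filterSet F) (bitFlip (fun _ => true) ⁻¹' filterSet F) :=
  Set.disjoint_left.2 fun x hx hx' =>
    compl_notMem hx (by simpa [filterSet, bitFlip, compl_ofPred] using hx')

/-- If a free (proper, containing all cofinite sets) filter on `ℕ`, viewed as a subset of the
Cantor space, is measurable with respect to the completed fair-coin product measure `μ`
(i.e. is `μ`-null-measurable), then it has `μ`-measure zero. -/
theorem free_filter_nullMeasurable_measure_zero (μ : Measure (ℕ → Bool))
    (hμ : IsCoinMeasure μ) (F : Filter ℕ) (hproper : F.NeBot) (hfree : F ≤ Filter.cofinite)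
    (hmeas : NullMeasurableSet (filterSet F) μ) :
    μ (filterSet F) = 0 := by
  have := hμ.isProbabilityMeasure
  set A := filterSet F
  have hrestrict : μ.restrict A = μ A • μ := by
    refine (hμ.eq_smul_of_measurePreserving_bitFlip fun i => ?_).trans (by simp)
    have hA : bitFlip (fun j => decide (j = i)) ⁻¹' A = A :=
      preimage_bitFlip_filterSet hfree (by simp)
    have := (hμ.measurePreserving_bitFlip _).restrict_preimage_emb
      (measurableEmbedding_bitFlip fun j => decide (j = i)) A
    rwa [hA] at this
  have hidem : μ A * μ A = μ A := by
    simpa using (congrArg (· A) hrestrict).symm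
  have hhalf : μ A + μ A ≤ 1 := by
    set τ := bitFlip fun _ => true
    have hτ := hμ.measurePreserving_bitFlip fun _ => true
    calc μ A + μ A = μ A + μ (τ ⁻¹' A) := by rw [hτ.measure_preimage hmeas]
      _ = μ (A ∪ τ ⁻¹' A) :=
        (measure_union₀ (hmeas.preimage hτ.quasiMeasurePreserving)
          (disjoint_filterSet_preimage_bitFlip_true F).aedisjoint).symm
      _ ≤ 1 := prob_le_one
  by_contra h
  have h1 : μ A = 1 :=
    (ENNReal.mul_right_inj h (measure_ne_top μ A)).1 (hidem.trans (mul_one _).symm)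
  norm_num [h1] at hhalf
end

section
/- Let H be a nonempty family of free filters on ℕ, each of which, as a subset of 2^ℕ, does not have the Baire property. If the intersection ⋂H has the Baire property, then there exists a family T of infinite subsets of ℕ with cardinality |T| ≤ |H| that is linearly ordered by almost inclusion ⊆* and has no pseudo-intersection, i.e. no infinite set Z ⊆ ℕ satisfies Z ⊆* Y for every Y ∈ T. (This expresses Talagrand's inequality 𝔱 ≤ 𝔣_ℳ.) -/
open Filter Set

/-- `A ⊆* B`: `A` is almost contained in `B`, i.e. `A \ B` is finite. -/
def AlmostSubset (A B : Set ℕ) : Prop := (A \ B).Finite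


noncomputable section TalagrandAux

/-- Cylinders are open. -/
lemma cylinder_isOpen (N : ℕ) (x : ℕ → Bool) : IsOpen {y : ℕ → Bool | ∀ i < N, y i = x i} := by
  have : {y : ℕ → Bool | ∀ i < N, y i = x i}
      = ⋂ i ∈ Finset.range N, (fun y : ℕ → Bool => y i) ⁻¹' {x i} := by
    ext y; simp [Set.mem_iInter]
  rw [this]
  exact isOpen_biInter_finset fun i _ => (continuous_apply i).isOpen_preimage _ (isOpen_discrete _)

/-- Basic neighborhoods in Cantor space. -/
lemma exists_cylinder_subset {U : Set (ℕ → Bool)} (hU : IsOpen U) {x : ℕ → Bool} (hx : x ∈ U) :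
    ∃ N, {y : ℕ → Bool | ∀ i < N, y i = x i} ⊆ U := by
  obtain ⟨I, u, hIu, hsub⟩ := isOpen_pi_iff.mp hU x hx
  refine ⟨(I.sup id) + 1, fun y hy => hsub fun a ha => ?_⟩
  have : y a = x a := hy a (Nat.lt_succ_of_le (Finset.le_sup (f := id) ha))
  rw [this]; exact (hIu a ha).2

/-- Uniform escape from a closed nowhere dense set. -/
lemma escape_nwd {M : Set (ℕ → Bool)} (hM : IsClosed M) (hint : interior M = ∅) (N : ℕ) :
    ∃ N', N < N' ∧ ∀ σ : ℕ → Bool, ∃ τ : ℕ → Bool, (∀ i < N, τ i = σ i) ∧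
      ∀ y : ℕ → Bool, (∀ i < N', y i = τ i) → y ∉ M := by
  classical
  -- for each restriction ν : Fin N → Bool choose an escape point and length
  have key : ∀ ν : Fin N → Bool, ∃ p : (ℕ → Bool) × ℕ,
      (∀ i : ℕ, ∀ h : i < N, p.1 i = ν ⟨i, h⟩) ∧
      ∀ y : ℕ → Bool, (∀ i < p.2, y i = p.1 i) → y ∉ M := by
    intro ν
    set σ : ℕ → Bool := fun i => if h : i < N then ν ⟨i, h⟩ else false with hσ
    have hne : ¬ {y : ℕ → Bool | ∀ i < N, y i = σ i} ⊆ M := by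
      intro hsub
      have : σ ∈ interior M :=
        interior_mono hsub (by
          rw [(cylinder_isOpen N σ).interior_eq]
          exact fun i _ => rfl)
      simp [hint] at this
    obtain ⟨x, hx1, hx2⟩ := not_subset.mp hne
    obtain ⟨N2, hN2⟩ := exists_cylinder_subset hM.isOpen_compl hx2
    refine ⟨⟨x, N2⟩, fun i h => ?_, fun y hy => hN2 hy⟩
    have := hx1 i h
    simp only [hσ, dif_pos h] at this
    exact this
  choose p hp1 hp2 using key
  refine ⟨max (N+1) ((Finset.univ : Finset (Fin N → Bool)).sup (fun ν => (p ν).2)),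
    lt_of_lt_of_le (Nat.lt_succ_self N) (le_max_left _ _), fun σ => ?_⟩
  set ν : Fin N → Bool := fun i => σ i with hν
  refine ⟨(p ν).1, fun i h => ?_, fun y hy => hp2 ν y fun i hi => hy i ?_⟩
  · rw [hp1 ν i h]
  · exact lt_of_lt_of_le hi (le_trans (Finset.le_sup (f := fun ν => (p ν).2) (Finset.mem_univ ν)) (le_max_right _ _))

end TalagrandAux

noncomputable section TalagrandAux2

/-- coordinatewise xor with a fixed pattern, as a homeomorphism. -/
def xorHomeo (c : ℕ → Bool) : (ℕ → Bool) ≃ₜ (ℕ → Bool) where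
  toFun x := fun m => xor (x m) (c m)
  invFun x := fun m => xor (x m) (c m)
  left_inv x := by funext m; simp [Bool.xor_assoc]
  right_inv x := by funext m; simp [Bool.xor_assoc]
  continuous_toFun := continuous_pi fun m =>
    (continuous_of_discreteTopology (f := fun b : Bool => xor b (c m))).comp (continuous_apply m)
  continuous_invFun := continuous_pi fun m =>
    (continuous_of_discreteTopology (f := fun b : Bool => xor b (c m))).comp (continuous_apply m)

lemma bp_isMeagre {F : Filter ℕ} (hbot : F.NeBot) (hcof : F ≤ Filter.cofinite)
    (hbp : HasBaireProperty (filterSet F)) : IsMeagre (filterSet F) := by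
  classical
  obtain ⟨U, M, hU, hM, hSD⟩ := hbp
  rcases eq_empty_or_nonempty U with hUe | ⟨x₀, hx₀⟩
  · rw [hSD, hUe]
    have : symmDiff (∅ : Set (ℕ → Bool)) M = M := by
      simp [symmDiff_def]
    rw [this]; exact hM
  exfalso
  obtain ⟨N, hN⟩ := exists_cylinder_subset hU hx₀
  -- θ flips all coordinates ≥ N
  set θ : (ℕ → Bool) ≃ₜ (ℕ → Bool) := xorHomeo (fun m => decide (N ≤ m)) with hθdef
  have hθ : ∀ x m, θ x m = xor (x m) (decide (N ≤ m)) := fun x m => rfl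
  have hMθ : IsMeagre (θ ⁻¹' M) :=
    hM.preimage_of_isOpenMap θ.continuous θ.isOpenMap
  -- the complement of M ∪ θ⁻¹M is dense
  have hdense : Dense (M ∪ θ ⁻¹' M)ᶜ := by
    apply dense_of_mem_residual
    rw [compl_union]
    exact Filter.inter_mem hM hMθ
  -- find a point of the cylinder avoiding both meager sets
  obtain ⟨x, hx1, hx2⟩ := hdense.exists_mem_open (cylinder_isOpen N x₀) ⟨x₀, fun i _ => rfl⟩
  simp only [mem_compl_iff, mem_union, not_or] at hx1
  obtain ⟨hxM, hxθM⟩ := hx1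
  have hUsub : U \ M ⊆ filterSet F := by
    rw [hSD]; intro y hy; exact Or.inl hy
  -- x ∈ filterSet F
  have hxF : x ∈ filterSet F := hUsub ⟨hN hx2, hxM⟩
  -- θ x ∈ filterSet F
  have hθxcyl : ∀ i < N, θ x i = x₀ i := by
    intro i hi
    rw [hθ, decide_eq_false (by omega), Bool.xor_false]
    exact hx2 i hi
  have hθxF : θ x ∈ filterSet F := hUsub ⟨hN hθxcyl, hxθM⟩
  -- but the two sets intersect in a finite set
  have hsmall : {n | x n = true} ∩ {n | θ x n = true} ⊆ Set.Iio N := by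
    intro m ⟨hm1, hm2⟩
    simp only [mem_setOf_eq, hθ] at hm2
    by_contra hm
    simp only [Set.mem_Iio, not_lt] at hm
    rw [decide_eq_true hm, hm1] at hm2
    simp at hm2
  have hmemF : {n | x n = true} ∩ {n | θ x n = true} ∈ F := Filter.inter_mem hxF hθxF
  have hfin : ({n | x n = true} ∩ {n | θ x n = true} : Set ℕ).Finite :=
    (Set.finite_Iio N).subset hsmall
  have hco : ({n | x n = true} ∩ {n | θ x n = true})ᶜ ∈ F := by
    apply hcof
    rw [Filter.mem_cofinite, compl_compl]
    exact hfin
  have : (∅ : Set ℕ) ∈ F := by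
    have := Filter.inter_mem hmemF hco
    rwa [Set.inter_compl_self] at this
  exact Filter.empty_notMem F this

end TalagrandAux2

lemma strictMono_le_apply {n : ℕ → ℕ} (hn : StrictMono n) (k : ℕ) : k ≤ n k := by
  induction k with
  | zero => exact Nat.zero_le _
  | succ k ih => exact Nat.succ_le_of_lt (lt_of_le_of_lt ih (hn (Nat.lt_succ_self k)))

/-- A non-meager filter admits a member avoiding infinitely many blocks of any partition,
even relative to an infinite set of block indices. -/
lemma nonmeager_escape {F : Filter ℕ} (hF : ¬ IsMeagre (filterSet F))
    {n : ℕ → ℕ} (hn : StrictMono n) {A : Set ℕ} (hA : A.Infinite) :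
    ∃ X ∈ F, {k | k ∈ A ∧ ∀ m, n k ≤ m → m < n (k+1) → m ∉ X}.Infinite := by
  classical
  by_contra hcon
  push_neg at hcon
  apply hF
  -- the closed nowhere dense pieces
  set C : ℕ → Set (ℕ → Bool) := fun j =>
    {x | ∀ k, k ∈ A → j ≤ k → ∃ m, n k ≤ m ∧ m < n (k+1) ∧ x m = true} with hC
  have hCclosed : ∀ j, IsClosed (C j) := by
    intro j
    have : C j = ⋂ (k : ℕ), ⋂ (_ : k ∈ A), ⋂ (_ : j ≤ k),
        (⋃ m ∈ Set.Ico (n k) (n (k+1)), {x : ℕ → Bool | x m = true}) := by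
      ext x
      simp only [hC, mem_setOf_eq, Set.mem_iInter, Set.mem_iUnion, Set.mem_Ico]
      constructor
      · intro h k hk hjk; obtain ⟨m, h1, h2, h3⟩ := h k hk hjk; exact ⟨m, ⟨h1, h2⟩, h3⟩
      · intro h k hk hjk; obtain ⟨m, ⟨h1, h2⟩, h3⟩ := h k hk hjk; exact ⟨m, h1, h2, h3⟩
    rw [this]
    refine isClosed_iInter fun k => isClosed_iInter fun _ => isClosed_iInter fun _ => ?_
    exact (Set.finite_Ico (n k) (n (k+1))).isClosed_biUnion fun m _ =>
      isClosed_eq (continuous_apply m) continuous_const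
  have hCint : ∀ j, interior (C j) = ∅ := by
    intro j
    by_contra hne
    obtain ⟨x, hx⟩ := Set.nonempty_iff_ne_empty.mpr hne
    obtain ⟨N, hNsub⟩ := exists_cylinder_subset isOpen_interior hx
    obtain ⟨k, hkA, hk⟩ := hA.exists_gt (max j N)
    have hkj : j ≤ k := le_of_lt (lt_of_le_of_lt (le_max_left _ _) hk)
    have hkN : N ≤ k := le_of_lt (lt_of_le_of_lt (le_max_right _ _) hk)
    set y : ℕ → Bool := fun m => if m < N then x m else false with hy
    have hyC : y ∈ C j := interior_subset (hNsub fun i hi => by simp [hy, hi])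
    obtain ⟨m, hm1, hm2, hm3⟩ := hyC k hkA hkj
    have : N ≤ m := le_trans hkN (le_trans (strictMono_le_apply hn k) hm1)
    simp [hy, Nat.not_lt.mpr this] at hm3
  -- filterSet F is covered by the C j
  have hcover : filterSet F ⊆ ⋃ j, C j := by
    intro x hx
    have hXF : {m | x m = true} ∈ F := hx
    have hfin := hcon _ hXF
    obtain ⟨j, hj⟩ := hfin.bddAbove
    refine Set.mem_iUnion.mpr ⟨j + 1, fun k hkA hjk => ?_⟩
    have hknotbad : ¬ (k ∈ A ∧ ∀ m, n k ≤ m → m < n (k+1) → m ∉ {m | x m = true}) := by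
      intro hbad
      have := hj hbad
      omega
    push_neg at hknotbad
    obtain ⟨m, h1, h2, h3⟩ := hknotbad hkA
    exact ⟨m, h1, h2, by simpa using h3⟩
  refine IsMeagre.mono hcover (isMeagre_iUnion fun j => ?_)
  -- each C j is meager
  rw [IsMeagre]
  apply residual_of_dense_open (hCclosed j).isOpen_compl
  rw [← interior_eq_empty_iff_dense_compl]
  exact hCint j

lemma interior_union_empty {X : Type*} [TopologicalSpace X] {s t : Set X}
    (hs : IsClosed s) (hsi : interior s = ∅) (hti : interior t = ∅) :
    interior (s ∪ t) = ∅ := by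
  have h1 : interior (s ∪ t) ∩ sᶜ ⊆ interior t := by
    apply interior_maximal _ (isOpen_interior.inter hs.isOpen_compl)
    intro x ⟨hx1, hx2⟩
    rcases interior_subset hx1 with h | h
    · exact absurd h hx2
    · exact h
  rw [hti, Set.subset_empty_iff, ← Set.disjoint_iff_inter_eq_empty,
    disjoint_compl_right_iff_subset] at h1
  have h2 : interior (s ∪ t) ⊆ interior s := interior_maximal h1 isOpen_interior
  rw [hsi] at h2
  exact Set.subset_empty_iff.mp h2

/-- Talagrand's characterization, one direction: a meager filter admits an interval
partition such that every member of the filter meets all but finitely many intervals. -/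
lemma meager_filter_partition {G : Filter ℕ} (hmg : IsMeagre (filterSet G)) :
    ∃ n : ℕ → ℕ, StrictMono n ∧
      ∀ X ∈ G, {k | ∀ m, n k ≤ m → m < n (k+1) → m ∉ X}.Finite := by
  classical
  obtain ⟨S, hSnwd, hScnt, hSsub⟩ := isMeagre_iff_countable_union_isNowhereDense.mp hmg
  have htrue : (fun _ => true : ℕ → Bool) ∈ filterSet G := by
    show {n : ℕ | true = true} ∈ G
    simpa using Filter.univ_mem
  have hSne : S.Nonempty := by
    obtain ⟨s, hs, _⟩ := hSsub htrue
    exact ⟨s, hs⟩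
  obtain ⟨f, hf⟩ := hScnt.exists_eq_range hSne
  -- increasing closed nowhere dense sets
  set Mc : ℕ → Set (ℕ → Bool) :=
    fun k => Nat.rec (closure (f 0)) (fun k ih => ih ∪ closure (f (k+1))) k with hMc
  have hMcsucc : ∀ k, Mc (k+1) = Mc k ∪ closure (f (k+1)) := fun k => rfl
  have hfnwd : ∀ j, interior (closure (f j)) = ∅ := by
    intro j
    have : f j ∈ S := by rw [hf]; exact ⟨j, rfl⟩
    exact hSnwd _ this
  have hMcclosed : ∀ k, IsClosed (Mc k) := by
    intro k; induction k with
    | zero => exact isClosed_closure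
    | succ k ih => rw [hMcsucc]; exact ih.union isClosed_closure
  have hMcint : ∀ k, interior (Mc k) = ∅ := by
    intro k; induction k with
    | zero => exact hfnwd 0
    | succ k ih =>
      rw [hMcsucc]
      exact interior_union_empty (hMcclosed k) ih (hfnwd (k+1))
  have hMcmono : ∀ j k, j ≤ k → Mc j ⊆ Mc k := by
    intro j k hjk
    induction hjk with
    | refl => exact subset_rfl
    | step h ih => rw [hMcsucc]; exact subset_trans ih Set.subset_union_left
  have hfMc : ∀ j, f j ⊆ Mc j := by
    intro j
    cases j with
    | zero => exact subset_closure
    | succ j => rw [hMcsucc]; exact subset_trans subset_closure Set.subset_union_right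
  -- define the partition by recursion using the uniform escape lemma
  have hstep : ∀ k N, ∃ N', N < N' ∧ ∀ σ : ℕ → Bool, ∃ τ : ℕ → Bool,
      (∀ i < N, τ i = σ i) ∧ ∀ y : ℕ → Bool, (∀ i < N', y i = τ i) → y ∉ Mc k :=
    fun k N => escape_nwd (hMcclosed k) (hMcint k) N
  choose st hst1 hst2 using hstep
  choose T hT1 hT2 using hst2
  set n : ℕ → ℕ := fun k => Nat.rec 0 (fun k ih => st k ih) k with hn
  have hnsucc : ∀ k, n (k+1) = st k (n k) := fun k => rfl
  have hnmono : StrictMono n := strictMono_nat_of_lt_succ fun k => by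
    rw [hnsucc]; exact hst1 k (n k)
  refine ⟨n, hnmono, fun X hX => ?_⟩
  by_contra hKfin
  have hK : {k | ∀ m, n k ≤ m → m < n (k+1) → m ∉ X}.Infinite := hKfin
  set K := {k | ∀ m, n k ≤ m → m < n (k+1) → m ∉ X} with hKdef
  set χ : ℕ → Bool := fun m => decide (m ∈ X) with hχ
  -- build the diagonal sequence of prefixes
  set ρ : ℕ → (ℕ → Bool) := fun k => Nat.rec χ
    (fun k ih => fun m => if m < n (k+1) then (if k ∈ K then T k (n k) ih m else ih m) else χ m) k
    with hρ
  have hρsucc : ∀ k m, ρ (k+1) m =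
      if m < n (k+1) then (if k ∈ K then T k (n k) (ρ k) m else ρ k m) else χ m :=
    fun k m => rfl
  have hagr : ∀ k m, m < n k → ρ (k+1) m = ρ k m := by
    intro k m hm
    have hm' : m < n (k+1) := lt_trans hm (hnmono (Nat.lt_succ_self k))
    rw [hρsucc, if_pos hm']
    by_cases hk : k ∈ K
    · rw [if_pos hk]
      have := hT1 k (n k) (ρ k) m hm
      exact this
    · rw [if_neg hk]
  have hchain : ∀ j k, j ≤ k → ∀ m, m < n j → ρ k m = ρ j m := by
    intro j k hjk
    induction hjk with
    | refl => intro m hm; rfl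
    | @step k h ih =>
      intro m hm
      rw [← ih m hm]
      exact hagr k m (lt_of_lt_of_le hm (hnmono.le_iff_le.mpr h))
  have hY : ∀ k m, m < n k → (ρ (m+1) m) = ρ k m := by
    intro k m hm
    rcases le_total (m+1) k with h | h
    · exact (hchain (m+1) k h m (lt_of_lt_of_le (Nat.lt_succ_self m)
        (strictMono_le_apply hnmono (m+1)))).symm
    · exact hchain k (m+1) h m hm
  set Y : ℕ → Bool := fun m => ρ (m+1) m with hYdef
  -- Y dominates χ
  have hdom : ∀ k m, χ m = true → ρ k m = true := by
    intro k
    induction k with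
    | zero => intro m hm; exact hm
    | succ k ih =>
      intro m hm
      rw [hρsucc]
      by_cases h1 : m < n (k+1)
      · rw [if_pos h1]
        by_cases h2 : k ∈ K
        · rw [if_pos h2]
          by_cases h3 : m < n k
          · rw [hT1 k (n k) (ρ k) m h3]; exact ih m hm
          · exfalso
            have hmX : m ∈ X := by simpa [hχ] using hm
            exact h2 m (Nat.le_of_not_lt h3) h1 hmX
        · rw [if_neg h2]; exact ih m hm
      · rw [if_neg h1]; exact hm
  have hYdom : ∀ m, m ∈ X → Y m = true := by
    intro m hm
    exact hdom (m+1) m (by simp [hχ, hm])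
  -- Y belongs to the filter set
  have hYG : Y ∈ filterSet G := by
    show {m | Y m = true} ∈ G
    exact Filter.mem_of_superset hX hYdom
  -- Y escapes every Mc k with k ∈ K
  have hYesc : ∀ k ∈ K, Y ∉ Mc k := by
    intro k hk
    apply hT2 k (n k) (ρ k) Y
    intro i hi
    rw [← hnsucc] at hi
    rw [hYdef]
    show ρ (i+1) i = T k (n k) (ρ k) i
    rw [hY (k+1) i hi, hρsucc, if_pos hi, if_pos hk]
  -- contradiction
  obtain ⟨s, hsS, hYs⟩ := hSsub hYG
  obtain ⟨j, rfl⟩ : ∃ j, f j = s := by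
    rw [hf] at hsS; obtain ⟨j, hj⟩ := hsS; exact ⟨j, hj⟩
  obtain ⟨k, hkK, hkj⟩ := hK.exists_gt j
  exact hYesc k hkK (hMcmono j k (le_of_lt hkj) (hfMc j hYs))

section TowerRec
open scoped Classical

/-- The diagonalization condition for one filter. -/
def diagOK (F : Filter ℕ) (nn : ℕ → ℕ) (B : Set ℕ) : Prop :=
  B.Infinite ∧ ∃ X ∈ F, ∀ k ∈ B, ∀ m, nn k ≤ m → m < nn (k+1) → m ∉ X

def AlmostSubset' (A B : Set ℕ) : Prop := (A \ B).Finite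

/-- Transfinite construction of the tower, along a well-ordering of `H`. -/
noncomputable def towerFn (H : Set (Filter ℕ)) (nn : ℕ → ℕ) : ↥H → Set ℕ :=
  (IsWellFounded.wf (r := WellOrderingRel (α := ↥H))).fix fun h prev =>
    if hg : ∃ B : Set ℕ, diagOK h.1 nn B ∧
        ∀ h' (hr : WellOrderingRel h' h), AlmostSubset' B (prev h' hr)
    then hg.choose else ∅

lemma towerFn_eq (H : Set (Filter ℕ)) (nn : ℕ → ℕ) (h : ↥H) :
    towerFn H nn h = if hg : ∃ B : Set ℕ, diagOK h.1 nn B ∧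
        ∀ h' (_ : WellOrderingRel h' h), AlmostSubset' B (towerFn H nn h')
      then hg.choose else ∅ :=
  WellFounded.fix_eq _ _ _

lemma towerFn_spec (H : Set (Filter ℕ)) (nn : ℕ → ℕ) (h : ↥H)
    (hg : ∃ B : Set ℕ, diagOK h.1 nn B ∧
      ∀ h' (_ : WellOrderingRel h' h), AlmostSubset' B (towerFn H nn h')) :
    diagOK h.1 nn (towerFn H nn h) ∧
      ∀ h' (_ : WellOrderingRel h' h), AlmostSubset' (towerFn H nn h) (towerFn H nn h') := by
  rw [towerFn_eq, dif_pos hg]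
  exact hg.choose_spec

end TowerRec

/-- Talagrand's inequality `𝔱 ≤ 𝔣_ℳ`: if `H` is a nonempty family of free filters on `ℕ`,
each without the Baire property as a subset of the Cantor space, whose intersection has the
Baire property, then there is a family `T` of infinite subsets of `ℕ` with `|T| ≤ |H|`,
linearly ordered by `⊆*`, having no infinite pseudo-intersection. -/
theorem tower_of_filters_without_BP (H : Set (Filter ℕ)) (hne : H.Nonempty)
    (hfree : ∀ F ∈ H, F.NeBot ∧ F ≤ Filter.cofinite)
    (hnbp : ∀ F ∈ H, ¬ HasBaireProperty (filterSet F))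
    (hint : HasBaireProperty (⋂ F ∈ H, filterSet F)) :
    ∃ T : Set (Set ℕ),
      Cardinal.mk T ≤ Cardinal.mk H ∧
      (∀ Y ∈ T, Y.Infinite) ∧
      (∀ Y ∈ T, ∀ Z ∈ T, AlmostSubset Y Z ∨ AlmostSubset Z Y) ∧
      ¬ ∃ Z : Set ℕ, Z.Infinite ∧ ∀ Y ∈ T, AlmostSubset Z Y := by
  classical
  obtain ⟨F₀, hF₀⟩ := hne
  set G := sSup H with hGdef
  have hGmem : ∀ s : Set ℕ, s ∈ G ↔ ∀ F ∈ H, s ∈ F := fun s => Filter.mem_sSup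
  have hGcof : G ≤ Filter.cofinite := fun s hs => (hGmem s).mpr fun F hF => (hfree F hF).2 hs
  have hGbot : G.NeBot := by
    rw [Filter.neBot_iff]
    intro hbot
    have h1 : (∅ : Set ℕ) ∈ G := by rw [hbot]; exact Filter.mem_bot
    haveI := (hfree F₀ hF₀).1
    exact Filter.empty_notMem F₀ ((hGmem ∅).mp h1 F₀ hF₀)
  have hGfs : filterSet G = ⋂ F ∈ H, filterSet F := by
    ext x
    simp only [filterSet, mem_setOf_eq, Set.mem_iInter]
    exact hGmem _
  have hGmeager : IsMeagre (filterSet G) := bp_isMeagre hGbot hGcof (by rw [hGfs]; exact hint)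
  obtain ⟨n, hn, hpart⟩ := meager_filter_partition hGmeager
  -- non-meagerness of each filter, and the escape property
  have hescape : ∀ h : ↥H, ∀ Z : Set ℕ, Z.Infinite → ∃ B, diagOK h.1 n B ∧ B ⊆ Z := by
    intro h Z hZ
    have hnm : ¬ IsMeagre (filterSet h.1) := by
      intro hm
      exact hnbp h.1 h.2 ⟨∅, filterSet h.1, isOpen_empty, hm, by simp [symmDiff_def]⟩
    obtain ⟨X, hXF, hXinf⟩ := nonmeager_escape hnm hn hZ
    exact ⟨{k | k ∈ Z ∧ ∀ m, n k ≤ m → m < n (k+1) → m ∉ X},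
      ⟨hXinf, X, hXF, fun k hk => hk.2⟩, fun k hk => hk.1⟩
  set A : ↥H → Set ℕ := towerFn H n with hA
  -- whenever there is a pseudo-intersection of the previous stages, the stage is good
  have key : ∀ h : ↥H,
      (∃ Z : Set ℕ, Z.Infinite ∧ ∀ h' (_ : WellOrderingRel h' h), AlmostSubset' Z (A h')) →
      ∃ B : Set ℕ, diagOK h.1 n B ∧
        ∀ h' (_ : WellOrderingRel h' h), AlmostSubset' B (A h') := by
    rintro h ⟨Z, hZ, hZs⟩
    obtain ⟨B, hB, hBZ⟩ := hescape h Z hZ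
    exact ⟨B, hB, fun h' hr => (hZs h' hr).subset (Set.diff_subset_diff_left hBZ)⟩
  by_cases hall : ∀ h : ↥H, ∃ B : Set ℕ, diagOK h.1 n B ∧
      ∀ h' (_ : WellOrderingRel h' h), AlmostSubset' B (A h')
  · -- the construction succeeds everywhere
    refine ⟨Set.range A, Cardinal.mk_range_le, ?_, ?_, ?_⟩
    · rintro Y ⟨h, rfl⟩
      exact (towerFn_spec H n h (hall h)).1.1
    · rintro Y ⟨h1, rfl⟩ Z ⟨h2, rfl⟩
      rcases trichotomous_of WellOrderingRel h1 h2 with hr | rfl | hr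
      · exact Or.inr ((towerFn_spec H n h2 (hall h2)).2 h1 hr)
      · exact Or.inl (by rw [AlmostSubset, Set.diff_self]; exact Set.finite_empty)
      · exact Or.inl ((towerFn_spec H n h1 (hall h1)).2 h2 hr)
    · rintro ⟨Z, hZinf, hZps⟩
      set XZ : Set ℕ := ⋃ k ∈ Z, Set.Ico (n k) (n (k+1)) with hXZ
      have hcomp : ∀ F ∈ H, XZᶜ ∈ F := by
        intro F hF
        obtain ⟨⟨hAinf, X, hXF, hXdiag⟩, _⟩ := towerFn_spec H n ⟨F, hF⟩ (hall ⟨F, hF⟩)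
        have hZA : (Z \ A ⟨F, hF⟩).Finite := hZps (A ⟨F, hF⟩) ⟨⟨F, hF⟩, rfl⟩
        set D : Set ℕ := ⋃ k ∈ (Z \ A ⟨F, hF⟩), Set.Ico (n k) (n (k+1)) with hD
        have hDfin : D.Finite := hZA.biUnion fun k _ => Set.finite_Ico _ _
        have hsub2 : X \ D ⊆ XZᶜ := by
          rintro m ⟨hmX, hmD⟩ hmXZ
          obtain ⟨k, hkZ, hm⟩ := Set.mem_iUnion₂.mp hmXZ
          by_cases hk : k ∈ A ⟨F, hF⟩
          · exact hXdiag k hk m hm.1 hm.2 hmX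
          · exact hmD (Set.mem_iUnion₂.mpr ⟨k, ⟨hkZ, hk⟩, hm⟩)
        have hDc : Dᶜ ∈ F := (hfree F hF).2 (by rw [Filter.mem_cofinite, compl_compl]; exact hDfin)
        exact Filter.mem_of_superset (Filter.inter_mem hXF hDc) hsub2
      have hXZG : XZᶜ ∈ G := (hGmem _).mpr hcomp
      have hfin := hpart _ hXZG
      apply hZinf
      apply hfin.subset
      intro k hkZ m hm1 hm2 hmc
      exact hmc (Set.mem_iUnion₂.mpr ⟨k, hkZ, hm1, hm2⟩)
  · -- the construction fails somewhere: take the minimal failure point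
    have hbadne : {h : ↥H | ¬ ∃ B : Set ℕ, diagOK h.1 n B ∧
        ∀ h' (_ : WellOrderingRel h' h), AlmostSubset' B (A h')}.Nonempty := by
      obtain ⟨h, hh⟩ := not_forall.mp hall
      exact ⟨h, hh⟩
    set wf := IsWellFounded.wf (r := WellOrderingRel (α := ↥H)) with hwf
    set h₀ := wf.min _ hbadne with hh₀
    have hmin := wf.min_mem _ hbadne
    have hgood : ∀ h', WellOrderingRel h' h₀ → ∃ B : Set ℕ, diagOK h'.1 n B ∧
        ∀ h'' (_ : WellOrderingRel h'' h'), AlmostSubset' B (A h'') := by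
      intro h' hr
      by_contra hbad'
      exact wf.not_lt_min _ hbad' hr
    refine ⟨A '' {h' | WellOrderingRel h' h₀},
      (Cardinal.mk_image_le).trans (Cardinal.mk_set_le _), ?_, ?_, ?_⟩
    · rintro Y ⟨h1, hr1, rfl⟩
      exact (towerFn_spec H n h1 (hgood h1 hr1)).1.1
    · rintro Y ⟨h1, hr1, rfl⟩ Z ⟨h2, hr2, rfl⟩
      rcases trichotomous_of WellOrderingRel h1 h2 with hr | rfl | hr
      · exact Or.inr ((towerFn_spec H n h2 (hgood h2 hr2)).2 h1 hr)
      · exact Or.inl (by rw [AlmostSubset, Set.diff_self]; exact Set.finite_empty)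
      · exact Or.inl ((towerFn_spec H n h1 (hgood h1 hr1)).2 h2 hr)
    · rintro ⟨Z, hZinf, hZps⟩
      exact hmin (key h₀ ⟨Z, hZinf, fun h' hr => hZps (A h') ⟨h', hr, rfl⟩⟩)
end

section
/- Assume Martin's Axiom. If H is a family of free filters on ℕ of cardinality less than 2^ℵ₀, each of which, as a subset of 2^ℕ, does not have the Baire property, then the intersection ⋂H does not have the Baire property. -/
open Filter Set

/-- Two conditions of a partial order are incompatible if they have no common extension. -/
def Incompatible {P : Type} [PartialOrder P] (p q : P) : Prop :=
  ¬ ∃ r : P, r ≤ p ∧ r ≤ q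

/-- A partial order is ccc if every antichain (set of pairwise incompatible elements)
is countable. -/
def CCC (P : Type) [PartialOrder P] : Prop :=
  ∀ A : Set P, A.Pairwise Incompatible → A.Countable

/-- A subset of a partial order is dense (in the forcing sense) if every element has an
extension in it. -/
def ForcingDense {P : Type} [PartialOrder P] (d : Set P) : Prop :=
  ∀ p : P, ∃ q ∈ d, q ≤ p

/-- A filter on a partial order (in the forcing sense): a nonempty, upward closed,
downward directed set. -/
def ForcingFilter {P : Type} [PartialOrder P] (G : Set P) : Prop :=
  G.Nonempty ∧ (∀ p ∈ G, ∀ q : P, p ≤ q → q ∈ G) ∧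
    ∀ p ∈ G, ∀ q ∈ G, ∃ r ∈ G, r ≤ p ∧ r ≤ q

/-- Martin's Axiom: for every nonempty ccc partial order `P` and every family `D` of fewer
than `2^ℵ₀` dense subsets of `P`, there is a filter on `P` meeting every member of `D`. -/
def MartinsAxiom : Prop :=
  ∀ (P : Type) [PartialOrder P], Nonempty P → CCC P →
    ∀ D : Set (Set P), Cardinal.mk D < Cardinal.continuum → (∀ d ∈ D, ForcingDense d) →
      ∃ G : Set P, ForcingFilter G ∧ ∀ d ∈ D, (G ∩ d).Nonempty

namespace MAaux

abbrev Cant := ℕ → Bool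

/-- Basic cylinder: points agreeing with `z` below `N`. -/
def cyl (N : ℕ) (z : Cant) : Set Cant := {y | ∀ i < N, y i = z i}

lemma mem_cyl_self (N : ℕ) (z : Cant) : z ∈ cyl N z := fun _ _ => rfl

lemma cyl_eq (N : ℕ) (z : Cant) :
    cyl N z = ⋂ i ∈ Finset.range N, (fun y : Cant => y i) ⁻¹' {z i} := by
  ext y; simp [cyl]

lemma isOpen_cyl (N : ℕ) (z : Cant) : IsOpen (cyl N z) := by
  rw [cyl_eq]
  exact (Finset.range N).finite_toSet.isOpen_biInter fun i _ =>
    (continuous_apply i).isOpen_preimage _ (isOpen_discrete _)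

lemma isClosed_cyl (N : ℕ) (z : Cant) : IsClosed (cyl N z) := by
  rw [cyl_eq]
  exact isClosed_biInter fun i _ =>
    IsClosed.preimage (continuous_apply i) (isClosed_discrete _)

lemma cyl_anti {N M : ℕ} (h : N ≤ M) (z : Cant) : cyl M z ⊆ cyl N z :=
  fun y hy i hi => hy i (lt_of_lt_of_le hi h)

lemma cyl_congr {N : ℕ} {z z' : Cant} (h : ∀ i < N, z i = z' i) : cyl N z = cyl N z' := by
  ext y
  constructor <;> intro hy i hi
  · rw [hy i hi, h i hi]
  · rw [hy i hi, h i hi]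

lemma exists_cyl_subset {U : Set Cant} (hU : IsOpen U) {z : Cant} (hz : z ∈ U) :
    ∃ N, cyl N z ⊆ U := by
  obtain ⟨I, u, hIu, hsub⟩ := isOpen_pi_iff.1 hU z hz
  refine ⟨(I.sup id) + 1, fun y hy => hsub ?_⟩
  intro a ha
  have : y a = z a := hy a (Nat.lt_succ_of_le (Finset.le_sup (f := id) ha))
  rw [this]
  exact (hIu a ha).2

/-- countable unions of meagre sets are meagre, general countable index. -/
lemma isMeagre_iUnion' {ι : Sort*} [Countable ι] {f : ι → Set Cant}
    (h : ∀ i, IsMeagre (f i)) : IsMeagre (⋃ i, f i) := by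
  rw [IsMeagre, compl_iUnion]
  exact countable_iInter_mem.2 h

lemma isMeagre_union {s t : Set Cant} (hs : IsMeagre s) (ht : IsMeagre t) :
    IsMeagre (s ∪ t) := by
  have : s ∪ t = ⋃ b : Bool, (bif b then s else t) := by
    ext x; simp [Bool.exists_bool, or_comm]
  rw [this]
  exact isMeagre_iUnion' fun b => by cases b <;> simpa

/-- image of a meagre set under a homeomorphism is meagre -/
lemma isMeagre_image (e : Cant ≃ₜ Cant) {s : Set Cant} (hs : IsMeagre s) :
    IsMeagre (⇑e '' s) := by
  obtain ⟨S, hnwd, hct, hcov⟩ := isMeagre_iff_countable_union_isNowhereDense.1 hs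
  refine isMeagre_iff_countable_union_isNowhereDense.2
    ⟨(Set.image ⇑e) '' S, ?_, hct.image _, ?_⟩
  · rintro t ⟨u, hu, rfl⟩
    have := hnwd u hu
    rw [IsNowhereDense] at this ⊢
    rw [← e.image_closure, ← e.image_interior, this, Set.image_empty]
  · intro x hx
    obtain ⟨y, hy, rfl⟩ := hx
    obtain ⟨u, hu, hyu⟩ := hcov hy
    exact ⟨⇑e '' u, Set.mem_image_of_mem _ hu, Set.mem_image_of_mem _ hyu⟩

lemma closed_nwd_union {s t : Set Cant} (hs : IsClosed s) (hsn : IsNowhereDense s)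
    (ht : IsClosed t) (htn : IsNowhereDense t) :
    IsClosed (s ∪ t) ∧ IsNowhereDense (s ∪ t) := by
  have h1 := isClosed_isNowhereDense_iff_compl.1 ⟨hs, hsn⟩
  have h2 := isClosed_isNowhereDense_iff_compl.1 ⟨ht, htn⟩
  refine isClosed_isNowhereDense_iff_compl.2 ?_
  rw [Set.compl_union]
  exact ⟨h1.1.inter h2.1, h1.2.inter_of_isOpen_left h2.2 h1.1⟩

/-- xor-with-w homeomorphism of Cantor space -/
def xorHomeo (w : Cant) : Cant ≃ₜ Cant where
  toFun x := fun n => xor (x n) (w n)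
  invFun x := fun n => xor (x n) (w n)
  left_inv x := by funext n; simp
  right_inv x := by funext n; simp
  continuous_toFun := continuous_pi fun n =>
    (continuous_of_discreteTopology (f := fun b => xor b (w n))).comp (continuous_apply n)
  continuous_invFun := continuous_pi fun n =>
    (continuous_of_discreteTopology (f := fun b => xor b (w n))).comp (continuous_apply n)

lemma mem_cyl {N : ℕ} {z y : Cant} : y ∈ cyl N z ↔ ∀ i < N, y i = z i := Iff.rfl

lemma xorHomeo_apply (w x : Cant) (n : ℕ) : xorHomeo w x n = xor (x n) (w n) := rfl

lemma free_diff_mem {F : Filter ℕ} (hF : F ≤ Filter.cofinite) {A B : Set ℕ}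
    (hA : A ∈ F) (hB : B.Finite) : A \ B ∈ F := by
  have : Bᶜ ∈ F := hF (by simpa [Filter.mem_cofinite] using hB)
  exact Filter.mem_of_superset (Filter.inter_mem hA this) (fun x hx => ⟨hx.1, hx.2⟩)

lemma filterSet_upward {G : Filter ℕ} {x y : Cant} (hx : x ∈ filterSet G)
    (h : ∀ n, x n = true → y n = true) : y ∈ filterSet G :=
  Filter.mem_of_superset hx h

lemma filterSet_finMod {G : Filter ℕ} (hG : G ≤ Filter.cofinite) {x y : Cant}
    (hx : x ∈ filterSet G) (hxy : {n | x n ≠ y n}.Finite) : y ∈ filterSet G := by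
  refine Filter.mem_of_superset (free_diff_mem hG hx hxy) ?_
  rintro n ⟨hn, hn'⟩
  simp only [mem_setOf_eq, not_not] at hn' hn ⊢
  rw [← hn']; exact hn

/-- zero-one + flip: a free filter with the Baire property is meagre. -/
lemma BP_meagre (G : Filter ℕ) (hne : G.NeBot) (hG : G ≤ Filter.cofinite)
    (hBP : HasBaireProperty (filterSet G)) : IsMeagre (filterSet G) := by
  by_contra hnm
  obtain ⟨U, M, hU, hM, hSUM⟩ := hBP
  set S := filterSet G with hS
  have hUS : U \ S ⊆ M := by
    intro u hu
    by_contra hum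
    exact hu.2 (hSUM ▸ Or.inl ⟨hu.1, hum⟩)
  have hUne : U.Nonempty := by
    rcases Set.eq_empty_or_nonempty U with h | h
    · exfalso; apply hnm; rw [hSUM, h, ← Set.bot_eq_empty, bot_symmDiff]; exact hM
    · exact h
  obtain ⟨x, hxU⟩ := hUne
  obtain ⟨N, hcyl⟩ := exists_cyl_subset hU hxU
  -- the complement of S is meagre
  have hVS : IsMeagre (cyl N x \ S) :=
    hM.mono (fun y hy => hUS ⟨hcyl hy.1, hy.2⟩)
  have hSc : IsMeagre Sᶜ := by
    have hsub : Sᶜ ⊆ ⋃ v : (Fin N → Bool),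
        ⇑(xorHomeo (fun j => if h : j < N then v ⟨j, h⟩ else false)) ''
          (cyl N x \ S) := by
      intro y hy
      refine Set.mem_iUnion.2 ⟨fun i => xor (y (i : ℕ)) (x (i : ℕ)), ?_⟩
      set w : Cant := fun j => if h : j < N then
        (fun i : Fin N => xor (y (i : ℕ)) (x (i : ℕ))) ⟨j, h⟩ else false with hw
      have hwval : ∀ j, w j = if j < N then xor (y j) (x j) else false := by
        intro j
        by_cases h : j < N
        · simp only [hw, dif_pos h, if_pos h]
        · simp [hw, dif_neg h]
      set z : Cant := fun j => xor (y j) (w j) with hz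
      have hzy : ∀ j, xorHomeo w z j = y j := by
        intro j
        rw [xorHomeo_apply]
        simp only [hz]
        cases y j <;> cases w j <;> rfl
      have hzcyl : z ∈ cyl N x := by
        rw [mem_cyl]
        intro i hi
        simp only [hz, hwval, if_pos hi]
        cases y i <;> cases x i <;> rfl
      have hzS : z ∉ S := by
        intro hzS'
        apply hy
        have : {n | z n ≠ y n}.Finite := by
          apply (Set.finite_Iio N).subset
          intro n hn
          simp only [mem_setOf_eq, hz, hwval] at hn
          by_contra hnN
          apply hn
          rw [if_neg (by simpa using hnN)]
          cases y n <;> rfl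
        exact filterSet_finMod hG hzS' this
      exact ⟨z, ⟨hzcyl, hzS⟩, funext hzy⟩
    exact (isMeagre_iUnion' fun v => isMeagre_image _ hVS).mono hsub
  -- flip
  set flip := xorHomeo (fun _ => true) with hflip
  have hFc : IsMeagre (⇑flip '' S)ᶜ := by
    rw [← Set.image_compl_eq flip.bijective]
    exact isMeagre_image _ hSc
  have hres : S ∩ ⇑flip '' S ∈ residual Cant := by
    have := isMeagre_union hSc hFc
    rw [IsMeagre] at this
    rwa [Set.compl_union, compl_compl, compl_compl] at this
  obtain ⟨y, hyS, z, hzS, hzy⟩ := (dense_of_mem_residual hres).nonempty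
  -- y = flip z, both in S: contradiction
  have hyz : ∀ n, y n = !(z n) := by
    intro n; rw [← hzy, xorHomeo_apply]; cases z n <;> rfl
  have h1 : {n | z n = true} ∈ G := hzS
  have h2 : {n | y n = true} ∈ G := hyS
  have h3 : {n | y n = true} = {n | z n = true}ᶜ := by
    ext n; simp [hyz n]
  have : (∅ : Set ℕ) ∈ G := by
    have := Filter.inter_mem h1 h2
    rwa [h3, Set.inter_compl_self] at this
  exact Filter.empty_notMem G this

/-- Hard direction of Talagrand's characterization. -/
theorem talagrand_hard (S : Set Cant)
    (hup : ∀ x y : Cant, x ∈ S → (∀ n, x n = true → y n = true) → y ∈ S)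
    (hm : IsMeagre S) :
    ∃ n : ℕ → ℕ, StrictMono n ∧ n 0 = 0 ∧
      ∀ x ∈ S, ∀ᶠ k in atTop, ∃ j, n k ≤ j ∧ j < n (k+1) ∧ x j = true := by
  classical
  obtain ⟨𝒮, hnwd, hct, hcov⟩ := isMeagre_iff_countable_union_isNowhereDense.1 hm
  obtain ⟨f, hf⟩ := (hct.insert ∅).exists_eq_range (insert_nonempty _ _)
  have hfnwd : ∀ i, IsNowhereDense (f i) := by
    intro i
    have : f i ∈ insert ∅ 𝒮 := hf ▸ Set.mem_range_self i
    rcases this with h | h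
    · rw [h]; exact isNowhereDense_empty
    · exact hnwd _ h
  -- closed nowhere dense increasing sequence covering S
  set C : ℕ → Set Cant := fun m => ⋃ i ∈ Finset.range (m+1), closure (f i) with hC
  have hCcl : ∀ m, IsClosed (C m) ∧ IsNowhereDense (C m) := by
    intro m
    induction m with
    | zero =>
      have h0 : C 0 = closure (f 0) := by
        simp [hC]
      rw [h0]; exact ⟨isClosed_closure, (hfnwd 0).closure⟩
    | succ k ih =>
      have : C (k+1) = C k ∪ closure (f (k+1)) := by
        simp only [hC]
        rw [Finset.range_add_one, Finset.set_biUnion_insert, Set.union_comm]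
      rw [this]
      exact ⟨(closed_nwd_union ih.1 ih.2 isClosed_closure (hfnwd (k+1)).closure).1,
        (closed_nwd_union ih.1 ih.2 isClosed_closure (hfnwd (k+1)).closure).2⟩
  have hCmono : ∀ {m m'}, m ≤ m' → C m ⊆ C m' := by
    intro m m' h
    intro u hu
    simp only [hC, Set.mem_iUnion, Finset.mem_range, exists_prop] at hu ⊢
    obtain ⟨i, hi, hui⟩ := hu
    exact ⟨i, by omega, hui⟩
  have hScov : S ⊆ ⋃ m, C m := by
    intro x hx
    obtain ⟨t, ht, hxt⟩ := hcov hx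
    have : t ∈ range f := by rw [← hf]; exact Set.mem_insert_of_mem _ ht
    obtain ⟨i, rfl⟩ := this
    exact Set.mem_iUnion.2 ⟨i, Set.mem_biUnion (Finset.self_mem_range_succ i)
      (subset_closure hxt)⟩
  -- the step: find the next partition point
  have hstep : ∀ (N k : ℕ), ∃ M, N < M ∧
      ∀ z : Cant, ∃ z', (∀ i < N, z' i = z i) ∧ cyl M z' ∩ C k = ∅ := by
    intro N k
    have hdense : ∀ v : Fin N → Bool, ∃ (w : Cant) (M : ℕ),
        (∀ i : Fin N, w (i : ℕ) = v i) ∧ cyl M w ∩ C k = ∅ := by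
      intro v
      set zv : Cant := fun i => if h : i < N then v ⟨i, h⟩ else false with hzv
      have hUopen : IsOpen (cyl N zv \ C k) := (isOpen_cyl N zv).sdiff (hCcl k).1
      have hUne : (cyl N zv \ C k).Nonempty := by
        by_contra hem
        rw [Set.not_nonempty_iff_eq_empty, Set.diff_eq_empty] at hem
        have : zv ∈ interior (C k) :=
          mem_interior.2 ⟨cyl N zv, hem, isOpen_cyl N zv, mem_cyl_self N zv⟩
        rw [((hCcl k).1.isNowhereDense_iff).1 (hCcl k).2] at this
        exact this
      obtain ⟨w, hw⟩ := hUne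
      obtain ⟨M, hM⟩ := exists_cyl_subset hUopen hw
      refine ⟨w, M, ?_, ?_⟩
      · intro i
        have := (mem_cyl.1 hw.1) i i.2
        rw [this, hzv]
        simp
      · apply Set.eq_empty_of_subset_empty
        intro y hy
        exact (hM hy.1).2 hy.2
    choose w Mv hwv hMv using hdense
    refine ⟨N + 1 + Finset.univ.sup Mv, by omega, ?_⟩
    intro z
    set v : Fin N → Bool := fun i => z (i : ℕ) with hv
    refine ⟨w v, ?_, ?_⟩
    · intro i hi
      have := hwv v ⟨i, hi⟩
      simpa [hv] using this
    · apply Set.eq_empty_of_subset_empty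
      rw [← hMv v]
      intro y hy
      exact ⟨cyl_anti (by have := Finset.le_sup (f := Mv) (Finset.mem_univ v); omega)
        (w v) hy.1, hy.2⟩
  -- build the partition by recursion
  set nn : ℕ → ℕ := fun k => Nat.recAux 0 (fun k ih => (hstep ih k).choose) k with hnn
  have hnn0 : nn 0 = 0 := rfl
  have hnsucc : ∀ k, nn (k+1) = (hstep (nn k) k).choose := fun _ => rfl
  have hlt : ∀ k, nn k < nn (k+1) := by
    intro k; rw [hnsucc k]; exact (hstep (nn k) k).choose_spec.1
  have havoid : ∀ k, ∀ z : Cant, ∃ z', (∀ i < nn k, z' i = z i) ∧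
      cyl (nn (k+1)) z' ∩ C k = ∅ := by
    intro k; rw [hnsucc k]; exact (hstep (nn k) k).choose_spec.2
  have hmono : StrictMono nn := strictMono_nat_of_lt_succ hlt
  refine ⟨nn, hmono, hnn0, ?_⟩
  intro x hx
  by_contra hcon
  rw [Filter.not_eventually] at hcon
  have hT : {k | ¬∃ j, nn k ≤ j ∧ j < nn (k+1) ∧ x j = true}.Infinite :=
    Nat.frequently_atTop_iff_infinite.1 hcon
  set T : Set ℕ := {k | ¬∃ j, nn k ≤ j ∧ j < nn (k+1) ∧ x j = true} with hTdef
  have hmiss : ∀ k ∈ T, ∀ j, nn k ≤ j → j < nn (k+1) → x j = false := by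
    intro k hk j h1 h2
    by_contra h
    exact hk ⟨j, h1, h2, by simpa using h⟩
  -- build the avoiding point y
  set upd : ℕ → Cant → Cant := fun k z =>
    if k ∈ T then (fun j => if j < nn (k+1) then (havoid k z).choose j else z j) else z
    with hupd
  set A : ℕ → Cant := fun m => Nat.recAux x (fun k ih => upd k ih) m with hA
  have hA0 : A 0 = x := rfl
  have hAsucc : ∀ m, A (m+1) = upd m (A m) := fun _ => rfl
  -- stability below nn k
  have hstab : ∀ k m, k ≤ m → ∀ j, j < nn k → A m j = A k j := by
    intro k m hkm
    induction m with
    | zero =>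
      intro j _
      have : k = 0 := Nat.le_zero.1 hkm
      rw [this]
    | succ m ih =>
      intro j hj
      rcases Nat.lt_or_ge k (m+1) with h | h
      · have hkm' : k ≤ m := Nat.lt_succ_iff.1 h
        rw [hAsucc m]; simp only [hupd]
        by_cases hmT : m ∈ T
        · rw [if_pos hmT]
          have hjm : j < nn (m+1) := lt_of_lt_of_le hj (hmono.le_iff_le.2 (by omega))
          simp only [if_pos hjm]
          have := ((havoid m (A m)).choose_spec.1) j
            (lt_of_lt_of_le hj (hmono.le_iff_le.2 hkm'))
          rw [this]
          exact ih hkm' j hj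
        · rw [if_neg hmT]; exact ih hkm' j hj
      · have : k = m + 1 := le_antisymm hkm h
        rw [this]
  -- y covers x
  have hAx : ∀ m j, x j = true → A m j = true := by
    intro m
    induction m with
    | zero => intro j h; exact h
    | succ m ih =>
      intro j h
      rw [hAsucc m]; simp only [hupd]
      by_cases hmT : m ∈ T
      · rw [if_pos hmT]
        by_cases hj : j < nn (m+1)
        · simp only [if_pos hj]
          rcases Nat.lt_or_ge j (nn m) with h2 | h2
          · rw [((havoid m (A m)).choose_spec.1) j h2]; exact ih j h
          · exact absurd h (by rw [hmiss m hmT j h2 hj]; simp)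
        · simp only [if_neg hj]; exact ih j h
      · rw [if_neg hmT]; exact ih j h
  set y : Cant := fun j => A (j+1) j with hy
  have hyA : ∀ k j, j < nn k → y j = A k j := by
    intro k j hj
    have hjlt : j < nn (j+1) := lt_of_lt_of_le (Nat.lt_succ_self j) hmono.le_apply
    simp only [hy]
    rcases le_total (j+1) k with h | h
    · exact (hstab (j+1) k h j hjlt).symm
    · exact hstab k (j+1) h j hj
  have hyS : y ∈ S := hup x y hx (fun j hj => hAx (j+1) j hj)
  have hyC : ∀ k ∈ T, y ∉ C k := by
    intro k hk
    have hupdk : A (k+1) = fun j => if j < nn (k+1) then (havoid k (A k)).choose j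
        else (A k) j := by
      rw [hAsucc k]; simp only [hupd]; rw [if_pos hk]
    have hycyl : y ∈ cyl (nn (k+1)) ((havoid k (A k)).choose) := by
      rw [mem_cyl]
      intro j hj
      rw [hyA (k+1) j hj, hupdk]
      simp only [if_pos hj]
    intro hyCk
    have := (havoid k (A k)).choose_spec.2
    exact absurd (Set.mem_inter hycyl hyCk) (by rw [this]; exact Set.notMem_empty y)
  obtain ⟨m, hym⟩ := Set.mem_iUnion.1 (hScov hyS)
  obtain ⟨k, hkT, hkm⟩ := hT.exists_gt m
  exact hyC k hkT (hCmono hkm.le hym)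

/-- Easy direction: if every member of `F` meets all but finitely many intervals of a
partition, then `filterSet F` is meagre. -/
lemma meagre_of_partition (F : Filter ℕ) (n : ℕ → ℕ) (hmono : StrictMono n)
    (h : ∀ X ∈ F, ∀ᶠ k in atTop, ∃ j, n k ≤ j ∧ j < n (k+1) ∧ j ∈ X) :
    IsMeagre (filterSet F) := by
  classical
  set A : ℕ → Set Cant := fun m =>
    ⋂ k ∈ {k | m ≤ k}, {x : Cant | ∃ j, n k ≤ j ∧ j < n (k+1) ∧ x j = true} with hA
  have hclosed : ∀ m, IsClosed (A m) := by
    intro m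
    refine isClosed_biInter fun k _ => ?_
    have : {x : Cant | ∃ j, n k ≤ j ∧ j < n (k+1) ∧ x j = true} =
        ⋃ j ∈ Finset.Ico (n k) (n (k+1)), {x : Cant | x j = true} := by
      ext x; simp [Finset.mem_Ico]
      tauto
    rw [this]
    refine (Finset.Ico (n k) (n (k+1))).finite_toSet.isClosed_biUnion fun j _ => ?_
    have hpre : {x : Cant | x j = true} = (fun y : Cant => y j) ⁻¹' {true} := rfl
    rw [hpre]
    exact IsClosed.preimage (continuous_apply j) (isClosed_discrete _)
  have hnwd : ∀ m, IsNowhereDense (A m) := by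
    intro m
    rw [(hclosed m).isNowhereDense_iff]
    rw [Set.eq_empty_iff_forall_notMem]
    intro x hx
    obtain ⟨N, hN⟩ := exists_cyl_subset isOpen_interior hx
    set y : Cant := fun j => if j < N then x j else false with hy
    have hycyl : y ∈ cyl N x := mem_cyl.2 fun i hi => by simp only [hy]; rw [if_pos hi]
    have hyA : y ∈ A m := interior_subset (hN hycyl)
    set k := max m N with hk
    have : y ∈ {x : Cant | ∃ j, n k ≤ j ∧ j < n (k+1) ∧ x j = true} := by
      have := Set.mem_iInter₂.1 hyA k (le_max_left m N)
      exact this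
    obtain ⟨j, hj1, _, hj3⟩ := this
    have hjN : N ≤ j := le_trans (le_trans (le_max_right m N) hmono.le_apply) hj1
    rw [hy] at hj3
    simp only [if_neg (not_lt.2 hjN)] at hj3
    exact absurd hj3 (by simp)
  have hsub : filterSet F ⊆ ⋃ m, A m := by
    intro x hx
    obtain ⟨m, hm⟩ := (Filter.eventually_atTop).1 (h _ hx)
    exact Set.mem_iUnion.2 ⟨m, Set.mem_iInter₂.2 fun k hk => hm k hk⟩
  refine IsMeagre.mono hsub (isMeagre_iUnion' fun m => ?_)
  rw [isMeagre_iff_countable_union_isNowhereDense]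
  exact ⟨{A m}, by simpa using hnwd m, Set.countable_singleton _, by simp⟩

/-- A nonmeagre filter admits, for every interval partition, a member missing
infinitely many intervals. -/
lemma nonmeagre_miss (F : Filter ℕ) (hF : ¬ IsMeagre (filterSet F))
    (n : ℕ → ℕ) (hmono : StrictMono n) :
    ∃ X ∈ F, {k | ∀ j, n k ≤ j → j < n (k+1) → j ∉ X}.Infinite := by
  by_contra hcon
  push_neg at hcon
  apply hF
  apply meagre_of_partition F n hmono
  intro X hX
  have := hcon X hX
  rw [Filter.eventually_atTop]
  obtain ⟨m, hm⟩ := this.bddAbove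
  refine ⟨m + 1, fun k hk => ?_⟩
  by_contra hme
  push_neg at hme
  have hkmem : k ∈ {k | ∀ j, n k ≤ j → j < n (k+1) → j ∉ X} := by
    intro j h1 h2 hjX
    exact hme j h1 h2 hjX
  have := hm hkmem
  omega

/-- Grouping: a nonmeagre filter has a member missing infinitely many intervals
with indices in a given infinite set R. -/
lemma grouping (F : Filter ℕ) (hF : ¬ IsMeagre (filterSet F))
    (n : ℕ → ℕ) (hmono : StrictMono n) (R : Set ℕ) (hR : R.Infinite) :
    ∃ X ∈ F, {k | k ∈ R ∧ ∀ j, n k ≤ j → j < n (k+1) → j ∉ X}.Infinite := by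
  classical
  set e : ℕ → ℕ := Nat.nth (· ∈ R) with he
  have heR : ∀ i, e i ∈ R := fun i => Nat.nth_mem_of_infinite hR i
  have hemono : StrictMono e := Nat.nth_strictMono hR
  set b : ℕ → ℕ := fun j => match j with | 0 => 0 | (j+1) => e j + 1 with hb
  have hble : ∀ j, b j ≤ e j := by
    intro j
    cases j with
    | zero => exact Nat.zero_le _
    | succ j => exact Nat.succ_le_of_lt (hemono (Nat.lt_succ_self j))
  have hbmono : StrictMono b := by
    apply strictMono_nat_of_lt_succ
    intro j
    exact Nat.lt_succ_of_le (hble j)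
  obtain ⟨X, hXF, hXinf⟩ := nonmeagre_miss F hF (n ∘ b) (hmono.comp hbmono)
  refine ⟨X, hXF, ?_⟩
  have hsub : e '' {j | ∀ i, (n ∘ b) j ≤ i → i < (n ∘ b) (j+1) → i ∉ X} ⊆
      {k | k ∈ R ∧ ∀ j, n k ≤ j → j < n (k+1) → j ∉ X} := by
    rintro k ⟨j, hj, rfl⟩
    refine ⟨heR j, fun i h1 h2 => ?_⟩
    apply hj i
    · exact le_trans (hmono.le_iff_le.2 (hble j)) h1
    · calc i < n (e j + 1) := h2
        _ = (n ∘ b) (j + 1) := rfl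
  exact (hXinf.image (hemono.injective.injOn)).mono hsub

/-- Conditions of the pseudo-intersection forcing. -/
structure PCond (𝒜 : Set (Set ℕ)) : Type where
  s : Finset ℕ
  w : Finset (Set ℕ)
  hw : ↑w ⊆ 𝒜

instance (𝒜 : Set (Set ℕ)) : PartialOrder (PCond 𝒜) where
  le p q := q.s ⊆ p.s ∧ q.w ⊆ p.w ∧ ∀ x ∈ p.s, x ∉ q.s → ∀ A ∈ q.w, x ∈ A
  le_refl p := ⟨subset_rfl, subset_rfl, fun x _ hx => absurd ‹x ∈ p.s› hx⟩
  le_trans p q r hpq hqr := by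
    refine ⟨hqr.1.trans hpq.1, hqr.2.1.trans hpq.2.1, ?_⟩
    intro x hxp hxr A hAr
    by_cases hxq : x ∈ q.s
    · exact hqr.2.2 x hxq hxr A hAr
    · exact hpq.2.2 x hxp hxq A (hqr.2.1 hAr)
  le_antisymm p q hpq hqp := by
    obtain ⟨s, w, hw⟩ := p
    obtain ⟨s', w', hw'⟩ := q
    simp only at hpq hqp
    congr 1
    · exact Finset.Subset.antisymm hqp.1 hpq.1
    · exact Finset.Subset.antisymm hqp.2.1 hpq.2.1

/-- MA implies 𝔭 = 𝔠 : pseudo-intersections for small SFIP families. -/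
lemma MA_pseudo_intersection (hMA : MartinsAxiom) (𝒜 : Set (Set ℕ))
    (hcard : Cardinal.mk 𝒜 < Cardinal.continuum)
    (hfip : ∀ W : Finset (Set ℕ), ↑W ⊆ 𝒜 → (⋂ A ∈ W, A).Infinite) :
    ∃ T : Set ℕ, T.Infinite ∧ ∀ A ∈ 𝒜, (T \ A).Finite := by
  classical
  -- ccc via σ-centredness
  have hccc : CCC (PCond 𝒜) := by
    intro A hA
    have hinj : Set.InjOn (fun p : PCond 𝒜 => p.s) A := by
      intro p hp q hq hpq
      by_contra hne
      have hpq' : p.s = q.s := hpq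
      refine hA hp hq hne ⟨⟨p.s, p.w ∪ q.w, ?_⟩, ⟨?_, ?_, ?_⟩, ⟨?_, ?_, ?_⟩⟩
      · rw [Finset.coe_union]
        exact Set.union_subset p.hw q.hw
      · exact subset_rfl
      · exact Finset.subset_union_left
      · intro x hx hx'; exact absurd hx hx'
      · rw [← hpq']
      · exact Finset.subset_union_right
      · intro x hx hx'
        rw [← hpq'] at hx'
        exact absurd hx hx'
    have hcnt : Countable ↥((fun p : PCond 𝒜 => p.s) '' A) := (Set.to_countable _).to_subtype
    have : Countable ↥A := Countable.of_equiv _ (hinj.bijOn_image.equiv _).symm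
    exact Set.countable_coe_iff.1 this
  have hnonempty : Nonempty (PCond 𝒜) := ⟨⟨∅, ∅, by simp⟩⟩
  -- dense sets
  set DA : ↥𝒜 → Set (PCond 𝒜) := fun A => {p | (A : Set ℕ) ∈ p.w} with hDA
  set Em : ℕ → Set (PCond 𝒜) := fun m => {p | ∃ x ∈ p.s, m ≤ x} with hEm
  have hDAdense : ∀ A : ↥𝒜, ForcingDense (DA A) := by
    intro A p
    refine ⟨⟨p.s, insert (A : Set ℕ) p.w, ?_⟩, ?_, ?_, ?_, ?_⟩
    · rw [Finset.coe_insert]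
      exact Set.insert_subset A.2 p.hw
    · exact Finset.mem_insert_self _ _
    · exact subset_rfl
    · exact Finset.subset_insert _ _
    · intro x hx hx'; exact absurd hx hx'
  have hEmdense : ∀ m : ℕ, ForcingDense (Em m) := by
    intro m p
    have hinf : (⋂ A ∈ p.w, A).Infinite := hfip p.w p.hw
    obtain ⟨x, hx, hmx⟩ := hinf.exists_gt m
    refine ⟨⟨insert x p.s, p.w, p.hw⟩, ⟨x, Finset.mem_insert_self _ _, hmx.le⟩,
      Finset.subset_insert _ _, subset_rfl, ?_⟩
    intro y hy hy' A hA
    have : y = x := by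
      rcases Finset.mem_insert.1 hy with h | h
      · exact h
      · exact absurd h hy'
    rw [this]
    exact Set.mem_iInter₂.1 hx A hA
  set D : Set (Set (PCond 𝒜)) := Set.range DA ∪ Set.range Em with hD
  have hDcard : Cardinal.mk D < Cardinal.continuum := by
    calc Cardinal.mk D ≤ Cardinal.mk (Set.range DA) + Cardinal.mk (Set.range Em) :=
          Cardinal.mk_union_le _ _
    _ < Cardinal.continuum := by
        apply Cardinal.add_lt_of_lt Cardinal.aleph0_le_continuum
        · exact lt_of_le_of_lt Cardinal.mk_range_le hcard
        · exact lt_of_le_of_lt Cardinal.mk_range_le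
            (by rw [Cardinal.mk_nat]; exact Cardinal.aleph0_lt_continuum)
  have hDdense : ∀ d ∈ D, ForcingDense d := by
    rintro d (⟨A, rfl⟩ | ⟨m, rfl⟩)
    · exact hDAdense A
    · exact hEmdense m
  obtain ⟨G, ⟨hGne, hGup, hGdir⟩, hGmeet⟩ := hMA (PCond 𝒜) hnonempty hccc D hDcard hDdense
  set T : Set ℕ := {x | ∃ p ∈ G, x ∈ p.s} with hT
  have hTinf : T.Infinite := by
    apply Set.infinite_of_not_bddAbove
    rintro ⟨b, hb⟩
    obtain ⟨p, hpG, hpE⟩ := hGmeet (Em (b+1)) (Set.mem_union_right _ ⟨b+1, rfl⟩)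
    obtain ⟨x, hxp, hbx⟩ := hpE
    have : x ≤ b := hb ⟨p, hpG, hxp⟩
    omega
  refine ⟨T, hTinf, ?_⟩
  intro A hA
  obtain ⟨p, hpG, hpD⟩ := hGmeet (DA ⟨A, hA⟩) (Set.mem_union_left _ ⟨⟨A, hA⟩, rfl⟩)
  apply (p.s.finite_toSet).subset
  rintro x ⟨hxT, hxA⟩
  obtain ⟨q, hqG, hxq⟩ := hxT
  obtain ⟨r, hrG, hrp, hrq⟩ := hGdir p hpG q hqG
  have hxr : x ∈ r.s := hrq.1 hxq
  by_contra hxp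
  exact hxA (hrp.2.2 x hxr hxp A hpD)

/-- maximal element of a nonempty finite set w.r.t. a trichotomous transitive relation -/
lemma exists_rmax {α : Type*} (r : α → α → Prop) [IsTrichotomous α r] [IsTrans α r]
    (s : Finset α) (hs : s.Nonempty) : ∃ b ∈ s, ∀ a ∈ s, a = b ∨ r a b := by
  classical
  induction s using Finset.induction_on with
  | empty => exact absurd hs Finset.not_nonempty_empty
  | @insert x s hx ih =>
    rcases s.eq_empty_or_nonempty with rfl | hs'
    · exact ⟨x, Finset.mem_insert_self _ _, by simp⟩
    · obtain ⟨b, hb, hmax⟩ := ih hs'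
      rcases trichotomous_of r x b with hxb | rfl2 | hbx
      · refine ⟨b, Finset.mem_insert_of_mem hb, ?_⟩
        intro a ha
        rcases Finset.mem_insert.1 ha with rfl | ha'
        · exact Or.inr hxb
        · exact hmax a ha'
      · refine ⟨b, Finset.mem_insert_of_mem hb, ?_⟩
        intro a ha
        rcases Finset.mem_insert.1 ha with rfl | ha'
        · exact Or.inl rfl2
        · exact hmax a ha'
      · refine ⟨x, Finset.mem_insert_self _ _, ?_⟩
        intro a ha
        rcases Finset.mem_insert.1 ha with rfl | ha'
        · exact Or.inl rfl
        · rcases hmax a ha' with rfl | hab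
          · exact Or.inr hbx
          · exact Or.inr (Trans.trans hab hbx)

theorem exists_common_T (hMA : MartinsAxiom) (H : Set (Filter ℕ))
    (hcard : Cardinal.mk H < Cardinal.continuum)
    (hfree : ∀ F ∈ H, F ≤ Filter.cofinite)
    (hnm : ∀ F ∈ H, ¬ IsMeagre (filterSet F))
    (n : ℕ → ℕ) (hmono : StrictMono n) :
    ∃ T : Set ℕ, T.Infinite ∧
      ∀ F ∈ H, {j | ∀ k ∈ T, ¬(n k ≤ j ∧ j < n (k+1))} ∈ F := by
  classical
  set ψ : Set ℕ → Set ℕ := fun T => {j | ∀ k ∈ T, ¬(n k ≤ j ∧ j < n (k+1))} with hψ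
  -- ψ is suitably monotone
  have hψdiff : ∀ {F : Filter ℕ}, F ≤ Filter.cofinite → ∀ {T T' : Set ℕ},
      (T' \ T).Finite → ψ T ∈ F → ψ T' ∈ F := by
    intro F hF T T' hfin hT
    have hrem : (⋃ k ∈ T' \ T, Set.Ico (n k) (n (k+1))).Finite :=
      hfin.biUnion fun k _ => Set.finite_Ico _ _
    refine Filter.mem_of_superset (free_diff_mem hF hT hrem) ?_
    rintro j ⟨hj1, hj2⟩
    intro k hk
    by_cases hkT : k ∈ T
    · exact hj1 k hkT
    · intro hcon
      exact hj2 (Set.mem_biUnion ⟨hk, hkT⟩ (Set.mem_Ico.2 ⟨hcon.1, hcon.2⟩))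
  -- shrinking into the filter
  have hshrink : ∀ F ∈ H, ∀ R : Set ℕ, R.Infinite →
      ∃ T : Set ℕ, T ⊆ R ∧ T.Infinite ∧ ψ T ∈ F := by
    intro F hF R hR
    obtain ⟨X, hXF, hXinf⟩ := grouping F (hnm F hF) n hmono R hR
    refine ⟨{k | k ∈ R ∧ ∀ j, n k ≤ j → j < n (k+1) → j ∉ X}, fun k hk => hk.1, hXinf, ?_⟩
    refine Filter.mem_of_superset hXF ?_
    intro j hjX k hk hcon
    exact hk.2 j hcon.1 hcon.2 hjX
  -- well-ordered recursion over H
  set Hs := {F : Filter ℕ // F ∈ H} with hHs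
  set r : Hs → Hs → Prop := WellOrderingRel with hr
  have wf : WellFounded r := (IsWellFounded.wf : WellFounded (@WellOrderingRel Hs))
  set step : ∀ F : Hs, (∀ F', r F' F → Set ℕ) → Set ℕ := fun F ih =>
    Classical.epsilon (fun T : Set ℕ =>
      T.Infinite ∧ ψ T ∈ F.val ∧ ∀ F' (h : r F' F), (T \ ih F' h).Finite) with hstep
  set Tf : Hs → Set ℕ := wf.fix step with hTf
  have hfix : ∀ F, Tf F = step F (fun F' _ => Tf F') := fun F => wf.fix_eq step F
  set good : Hs → Prop := fun F =>
    (Tf F).Infinite ∧ ψ (Tf F) ∈ F.val ∧ ∀ F', r F' F → (Tf F \ Tf F').Finite with hgood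
  -- the common SFIP argument
  have hSFIP : ∀ (Φ : Set Hs), (∀ F' ∈ Φ, good F') →
      ∀ W : Finset (Set ℕ), ↑W ⊆ Tf '' Φ → (⋂ A ∈ W, A).Infinite := by
    intro Φ hGoodOn W hW
    rcases W.eq_empty_or_nonempty with rfl | hWne
    · simpa using Set.infinite_univ
    · have hch : ∀ A ∈ W, ∃ F' : Hs, F' ∈ Φ ∧ Tf F' = A := by
        intro A hA
        obtain ⟨F', hF', hTfF'⟩ := hW hA
        exact ⟨F', hF', hTfF'⟩
      set pick : ∀ A ∈ W, Hs := fun A hA => (hch A hA).choose with hpick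
      set S : Finset Hs := W.attach.image (fun A => pick A.1 A.2) with hS
      have hSne : S.Nonempty := by
        obtain ⟨A, hA⟩ := hWne
        exact ⟨pick A hA, Finset.mem_image.2 ⟨⟨A, hA⟩, W.mem_attach _, rfl⟩⟩
      have hSr : IsTrichotomous Hs r := by rw [hr]; infer_instance
      have hStr : IsTrans Hs r := by rw [hr]; infer_instance
      obtain ⟨b, hbS, hmax⟩ := exists_rmax r S hSne
      have hbΦ : b ∈ Φ := by
        obtain ⟨A, _, rfl⟩ := Finset.mem_image.1 hbS
        exact ((hch A.1 A.2).choose_spec).1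
      have hgb := hGoodOn b hbΦ
      have hclaim : ∀ A ∈ W, (Tf b \ A).Finite := by
        intro A hA
        have hpA := (hch A hA).choose_spec
        have hmem : pick A hA ∈ S := Finset.mem_image.2 ⟨⟨A, hA⟩, W.mem_attach _, rfl⟩
        rcases hmax _ hmem with heq | hrel
        · rw [← hpA.2, ← heq]
          simp [hpick]
        · rw [← hpA.2]
          exact hgb.2.2 _ hrel
      have hsub : Tf b \ (⋃ A ∈ W, (Tf b \ A)) ⊆ ⋂ A ∈ W, A := by
        rintro j ⟨hj1, hj2⟩
        refine Set.mem_iInter₂.2 fun A hA => ?_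
        by_contra hjA
        exact hj2 (Set.mem_biUnion hA ⟨hj1, hjA⟩)
      exact ((hgb.1.diff (W.finite_toSet.biUnion hclaim)).mono hsub)
  -- every Tf is good
  have hGood : ∀ F : Hs, good F := by
    intro F
    refine wf.induction F ?_
    intro F ih
    have hex : ∃ T : Set ℕ,
        T.Infinite ∧ ψ T ∈ F.val ∧ ∀ F' (h : r F' F), (T \ Tf F').Finite := by
      set Φ : Set Hs := {F' | r F' F} with hΦ
      have hcard𝒜 : Cardinal.mk (Tf '' Φ) < Cardinal.continuum :=
        lt_of_le_of_lt (le_trans Cardinal.mk_image_le (Cardinal.mk_set_le Φ)) hcard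
      obtain ⟨T₀, hT₀inf, hT₀⟩ := MA_pseudo_intersection hMA (Tf '' Φ) hcard𝒜
        (hSFIP Φ (fun F' hF' => ih F' hF'))
      obtain ⟨T₁, hT₁sub, hT₁inf, hT₁ψ⟩ := hshrink F.val F.2 T₀ hT₀inf
      refine ⟨T₁, hT₁inf, hT₁ψ, ?_⟩
      intro F' h
      exact ((hT₀ (Tf F') (Set.mem_image_of_mem _ h)).subset
        (fun j hj => ⟨hT₁sub hj.1, hj.2⟩))
    have hspec := Classical.epsilon_spec hex
    refine ⟨?_, ?_, ?_⟩ <;> rw [hfix F]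
    · exact hspec.1
    · exact hspec.2.1
    · intro F' hF'
      exact hspec.2.2 F' hF'
  -- final pseudo-intersection
  have hcardB : Cardinal.mk (Tf '' Set.univ) < Cardinal.continuum :=
    lt_of_le_of_lt (le_trans Cardinal.mk_image_le (Cardinal.mk_set_le _)) hcard
  obtain ⟨T, hTinf, hT⟩ := MA_pseudo_intersection hMA (Tf '' Set.univ) hcardB
    (hSFIP Set.univ (fun F' _ => hGood F'))
  refine ⟨T, hTinf, ?_⟩
  intro F hF
  have h1 : ψ (Tf ⟨F, hF⟩) ∈ F := (hGood ⟨F, hF⟩).2.1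
  have h2 : (T \ Tf ⟨F, hF⟩).Finite := hT _ (Set.mem_image_of_mem _ (Set.mem_univ _))
  exact hψdiff (hfree F hF) h2 h1

end MAaux

open MAaux in
/-- Assuming Martin's Axiom, the intersection of fewer than `2^ℵ₀` free filters on `ℕ`,
each without the Baire property as a subset of the Cantor space, does not have the
Baire property. -/
theorem MA_inter_filters_not_baireProperty (hMA : MartinsAxiom)
    (H : Set (Filter ℕ)) (hne : H.Nonempty) (hcard : Cardinal.mk H < Cardinal.continuum)
    (hfree : ∀ F ∈ H, F.NeBot ∧ F ≤ Filter.cofinite)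
    (hnbp : ∀ F ∈ H, ¬ HasBaireProperty (filterSet F)) :
    ¬ HasBaireProperty (⋂ F ∈ H, filterSet F) := by
  classical
  intro hBP
  -- the intersection is the filterSet of the supremum filter
  have hSeq : (⋂ F ∈ H, filterSet F) = filterSet (sSup H) := by
    ext x
    simp only [Set.mem_iInter, filterSet, Set.mem_setOf_eq, Filter.mem_sSup]
  obtain ⟨F₀, hF₀⟩ := hne
  have hG0ne : (sSup H).NeBot := by
    have := (hfree F₀ hF₀).1
    exact Filter.neBot_of_le (le_sSup hF₀)
  have hG0free : sSup H ≤ Filter.cofinite := sSup_le fun F hF => (hfree F hF).2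
  rw [hSeq] at hBP
  have hmeag : IsMeagre (filterSet (sSup H)) := BP_meagre _ hG0ne hG0free hBP
  -- get the Talagrand partition
  obtain ⟨n, hmono, hn0, hconc⟩ := talagrand_hard (filterSet (sSup H))
    (fun x y hx hxy => by
      have hx' : {m | x m = true} ∈ sSup H := hx
      show {m | y m = true} ∈ sSup H
      exact Filter.mem_of_superset hx' (fun m hm => hxy m hm)) hmeag
  -- the members of H are nonmeagre
  have hnm : ∀ F ∈ H, ¬ IsMeagre (filterSet F) := by
    intro F hF hmF
    exact hnbp F hF ⟨∅, filterSet F, isOpen_empty, hmF, by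
      rw [← Set.bot_eq_empty, bot_symmDiff]⟩
  -- common missing set T
  obtain ⟨T, hTinf, hT⟩ := exists_common_T hMA H hcard (fun F hF => (hfree F hF).2)
    hnm n hmono
  -- build the point of the intersection missing infinitely many intervals
  set x : Cant := fun j => decide (∀ k ∈ T, ¬(n k ≤ j ∧ j < n (k+1))) with hx
  have hxset : {j | x j = true} = {j | ∀ k ∈ T, ¬(n k ≤ j ∧ j < n (k+1))} := by
    ext j
    simp [hx]
  have hxS : x ∈ filterSet (sSup H) := by
    rw [filterSet, Set.mem_setOf_eq, Filter.mem_sSup]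
    intro F hF
    rw [hxset]
    exact hT F hF
  have hev := hconc x hxS
  have hfreq : ∃ᶠ k in atTop, ¬∃ j, n k ≤ j ∧ j < n (k+1) ∧ x j = true := by
    rw [Nat.frequently_atTop_iff_infinite]
    refine hTinf.mono ?_
    intro k hk
    rintro ⟨j, hj1, hj2, hj3⟩
    have hjmem : j ∈ {j | x j = true} := hj3
    rw [hxset] at hjmem
    exact hjmem k hk ⟨hj1, hj2⟩
  obtain ⟨k, hk1, hk2⟩ := (hfreq.and_eventually hev).exists
  exact hk1 hk2
end

section
/- Let H be a nonempty family of free filters on ℕ, each of which, as a subset of 2^ℕ, does not have the Baire property, and suppose the intersection ⋂H has the Baire property. Then there exists a family D of at most |H| many subsets of [ℕ]^ℕ, each of which is open and dense in ([ℕ]^ℕ, ⊆*), such that ⋂D = ∅. (This expresses Plewik's inequality 𝔥 ≤ 𝔣_ℳ.) -/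
open Filter Set

/-- A set `d` of infinite subsets of `ℕ` is open in `([ℕ]^ℕ, ⊆*)` if it is downward closed
under almost inclusion among infinite sets. -/
def IsOpenAS (d : Set (Set ℕ)) : Prop :=
  d ⊆ {x : Set ℕ | x.Infinite} ∧
    ∀ y ∈ d, ∀ x : Set ℕ, x.Infinite → AlmostSubset x y → x ∈ d

/-- A set `d` of infinite subsets of `ℕ` is dense in `([ℕ]^ℕ, ⊆*)` if every infinite set has
an infinite almost-subset in `d`. -/
def IsDenseAS (d : Set (Set ℕ)) : Prop :=
  ∀ x : Set ℕ, x.Infinite → ∃ y ∈ d, y.Infinite ∧ AlmostSubset y x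

namespace PlewikAux


/-- Basic cylinder in Cantor space. -/
def Cyl (σ : ℕ → Bool) (m : ℕ) : Set (ℕ → Bool) := {x | ∀ i < m, x i = σ i}

lemma self_mem_Cyl (σ : ℕ → Bool) (m : ℕ) : σ ∈ Cyl σ m := fun _ _ => rfl

lemma Cyl_anti {σ : ℕ → Bool} {m m' : ℕ} (h : m ≤ m') : Cyl σ m' ⊆ Cyl σ m :=
  fun _ hx i hi => hx i (lt_of_lt_of_le hi h)

lemma isOpen_Cyl (σ : ℕ → Bool) (m : ℕ) : IsOpen (Cyl σ m) := by
  have : Cyl σ m = ⋂ i ∈ Finset.range m, {x : ℕ → Bool | x i = σ i} := by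
    ext x; simp [Cyl]
  rw [this]
  refine isOpen_biInter_finset fun i _ => ?_
  have : {x : ℕ → Bool | x i = σ i} = (fun x : ℕ → Bool => x i) ⁻¹' {σ i} := by
    ext x; simp
  rw [this]
  exact (isOpen_discrete {σ i}).preimage (continuous_apply i)

lemma isClosed_eval (i : ℕ) (b : Bool) : IsClosed {x : ℕ → Bool | x i = b} := by
  have : {x : ℕ → Bool | x i = b} = (fun x : ℕ → Bool => x i) ⁻¹' {b} := by ext x; simp
  rw [this]
  exact (isClosed_discrete {b}).preimage (continuous_apply i)

lemma exists_Cyl_subset {U : Set (ℕ → Bool)} (hU : IsOpen U) {x : ℕ → Bool} (hx : x ∈ U) :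
    ∃ m, Cyl x m ⊆ U := by
  rcases isOpen_pi_iff.1 hU x hx with ⟨I, u, hu, hsub⟩
  rcases I.bddAbove with ⟨b, hb⟩
  refine ⟨b + 1, fun y hy => hsub ?_⟩
  intro i hi
  have : y i = x i := hy i (Nat.lt_succ_of_le (hb hi))
  rw [this]; exact (hu i hi).2

lemma not_Cyl_subset_nwd {N : Set (ℕ → Bool)} (hN : IsNowhereDense N) (σ : ℕ → Bool) (m : ℕ) :
    ¬ Cyl σ m ⊆ N := by
  intro h
  have h1 : Cyl σ m ⊆ interior (closure N) :=
    interior_maximal (h.trans subset_closure) (isOpen_Cyl σ m)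
  rw [hN] at h1
  exact h1 (self_mem_Cyl σ m)

lemma pointwise_avoid {N : Set (ℕ → Bool)} (hNc : IsClosed N) (hN : IsNowhereDense N)
    (σ : ℕ → Bool) (n : ℕ) :
    ∃ m τ, n < m ∧ (∀ i < n, τ i = σ i) ∧ Cyl τ m ∩ N = ∅ := by
  have hdense : Dense Nᶜ := (isClosed_isNowhereDense_iff_compl.1 ⟨hNc, hN⟩).2
  obtain ⟨x, hxN, hxC⟩ := hdense.exists_mem_open (isOpen_Cyl σ n) ⟨σ, self_mem_Cyl σ n⟩
  obtain ⟨m, hm⟩ := exists_Cyl_subset hNc.isOpen_compl hxN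
  refine ⟨max m (n + 1), x, lt_of_lt_of_le (Nat.lt_succ_self n) (le_max_right _ _),
    fun i hi => hxC i hi, ?_⟩
  rw [Set.eq_empty_iff_forall_notMem]
  rintro y ⟨hy1, hy2⟩
  exact hm (Cyl_anti (le_max_left _ _) hy1) hy2

lemma uniform_avoid {N : Set (ℕ → Bool)} (hNc : IsClosed N) (hN : IsNowhereDense N) (n : ℕ) :
    ∃ m, n < m ∧ ∀ σ : ℕ → Bool, ∃ τ, (∀ i < n, τ i = σ i) ∧ Cyl τ m ∩ N = ∅ := by
  classical
  have h := fun s : Fin n → Bool =>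
    pointwise_avoid hNc hN (fun i => if h : i < n then s ⟨i, h⟩ else false) n
  choose m τ hm hagree hdisj using h
  refine ⟨max (n + 1) (Finset.univ.sup m), lt_of_lt_of_le (Nat.lt_succ_self n) (le_max_left _ _),
    fun σ => ?_⟩
  set s : Fin n → Bool := fun i => σ i with hs
  refine ⟨τ s, fun i hi => ?_, ?_⟩
  · rw [hagree s i hi]; simp [hi, hs]
  · rw [Set.eq_empty_iff_forall_notMem]
    rintro y ⟨hy1, hy2⟩
    have : y ∈ Cyl (τ s) (m s) :=
      Cyl_anti (le_trans (Finset.le_sup (Finset.mem_univ s)) (le_max_right _ _)) hy1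
    have hd := hdisj s
    rw [Set.eq_empty_iff_forall_notMem] at hd
    exact hd y ⟨this, hy2⟩

lemma nwd_union {s t : Set (ℕ → Bool)} (hsc : IsClosed s) (hs : IsNowhereDense s)
    (htc : IsClosed t) (ht : IsNowhereDense t) :
    IsClosed (s ∪ t) ∧ IsNowhereDense (s ∪ t) := by
  rw [isClosed_isNowhereDense_iff_compl] at *
  rw [Set.compl_union]
  exact ⟨(isClosed_isNowhereDense_iff_compl.1 ⟨hsc, hs⟩).1.inter
      (isClosed_isNowhereDense_iff_compl.1 ⟨htc, ht⟩).1,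
    ((isClosed_isNowhereDense_iff_compl.1 ⟨hsc, hs⟩).2).inter_of_isOpen_left
      ((isClosed_isNowhereDense_iff_compl.1 ⟨htc, ht⟩).2)
      (isClosed_isNowhereDense_iff_compl.1 ⟨hsc, hs⟩).1⟩

lemma meagre_cover {S : Set (ℕ → Bool)} (h : IsMeagre S) :
    ∃ M : ℕ → Set (ℕ → Bool), (∀ k, IsClosed (M k)) ∧ (∀ k, IsNowhereDense (M k)) ∧
      (∀ j k, j ≤ k → M j ⊆ M k) ∧ S ⊆ ⋃ k, M k := by
  obtain ⟨S', hnwd, hcnt, hcov⟩ := isMeagre_iff_countable_union_isNowhereDense.1 h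
  have hcnt' : (insert (∅ : Set (ℕ → Bool)) S').Countable := hcnt.insert _
  obtain ⟨f, hf⟩ := hcnt'.exists_eq_range (insert_nonempty _ _)
  set M : ℕ → Set (ℕ → Bool) := fun k => Nat.rec (closure (f 0))
    (fun k Mk => Mk ∪ closure (f (k + 1))) k with hM
  have hfnwd : ∀ k, IsNowhereDense (f k) := by
    intro k
    have : f k ∈ insert ∅ S' := hf ▸ Set.mem_range_self k
    rcases this with h | h
    · rw [h]; exact isNowhereDense_empty
    · exact hnwd _ h
  have key : ∀ k, IsClosed (M k) ∧ IsNowhereDense (M k) := by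
    intro k
    induction k with
    | zero => exact ⟨isClosed_closure, (hfnwd 0).closure⟩
    | succ k ih => exact nwd_union ih.1 ih.2 isClosed_closure (hfnwd (k + 1)).closure
  have hmono : ∀ j k, j ≤ k → M j ⊆ M k := by
    intro j k hjk
    induction k with
    | zero => rw [Nat.le_zero.1 hjk]
    | succ k ih =>
      rcases Nat.le_succ_iff.1 hjk with h | h
      · exact (ih h).trans Set.subset_union_left
      · rw [h]
  have hsub : ∀ k, closure (f k) ⊆ M k := by
    intro k; cases k with
    | zero => exact subset_rfl
    | succ k => exact Set.subset_union_right
  refine ⟨M, fun k => (key k).1, fun k => (key k).2, hmono, ?_⟩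
  intro x hx
  obtain ⟨t, htS, hxt⟩ := hcov hx
  have : t ∈ Set.range f := by rw [← hf]; exact Set.mem_insert_of_mem _ htS
  obtain ⟨k, rfl⟩ := this
  exact Set.mem_iUnion.2 ⟨k, hsub k (subset_closure hxt)⟩



lemma exists_seq (M : ℕ → Set (ℕ → Bool)) (hc : ∀ k, IsClosed (M k))
    (hn : ∀ k, IsNowhereDense (M k)) :
    ∃ N : ℕ → ℕ, N 0 = 0 ∧ StrictMono N ∧
      ∀ k, ∀ σ : ℕ → Bool, ∃ τ, (∀ i < N k, τ i = σ i) ∧ Cyl τ (N (k + 1)) ∩ M k = ∅ := by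
  choose g hg1 hg2 using fun k n => uniform_avoid (hc k) (hn k) n
  refine ⟨fun k => Nat.rec 0 (fun k nk => g k nk) k, rfl, strictMono_nat_of_lt_succ ?_, ?_⟩
  · intro k; exact hg1 k _
  · intro k σ; exact hg2 k _ σ

lemma find_interval {N : ℕ → ℕ} (hN0 : N 0 = 0) (hNs : StrictMono N) (i : ℕ) :
    ∃ k, N k ≤ i ∧ i < N (k + 1) := by
  have hex : ∃ k, i < N (k + 1) := ⟨i, lt_of_lt_of_le (Nat.lt_succ_self i) (hNs.le_apply)⟩
  classical
  refine ⟨Nat.find hex, ?_, Nat.find_spec hex⟩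
  rcases Nat.eq_zero_or_pos (Nat.find hex) with h | h
  · rw [h, hN0]; exact Nat.zero_le i
  · have h2 := Nat.find_min hex (Nat.sub_lt h Nat.one_pos)
    push_neg at h2
    have h3 : Nat.find hex - 1 + 1 = Nat.find hex := Nat.succ_pred_eq_of_pos h
    rwa [h3] at h2

/-- Key construction: if `A` misses infinitely many of the intervals `[N k, N (k+1))`,
then some characteristic function extending `A` avoids all the `M j`. -/
lemma exists_avoid_all {M : ℕ → Set (ℕ → Bool)} {N : ℕ → ℕ}
    (hMmono : ∀ j k, j ≤ k → M j ⊆ M k) (hN0 : N 0 = 0) (hNs : StrictMono N)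
    (havoid : ∀ k, ∀ σ : ℕ → Bool, ∃ τ, (∀ i < N k, τ i = σ i) ∧ Cyl τ (N (k + 1)) ∩ M k = ∅)
    (A : Set ℕ) (hbad : {k | ∀ i, N k ≤ i → i < N (k + 1) → i ∉ A}.Infinite) :
    ∃ x : ℕ → Bool, (∀ i ∈ A, x i = true) ∧ ∀ j, x ∉ M j := by
  classical
  choose τf hτa hτd using havoid
  set y : ℕ → ℕ → Bool := fun k => Nat.rec (fun _ => false)
    (fun k yk => if (∀ i, N k ≤ i → i < N (k + 1) → i ∉ A) then τf k yk
      else fun i => if i < N k then yk i else decide (i ∈ A)) k with hy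
  have ysucc : ∀ k, y (k + 1) = if (∀ i, N k ≤ i → i < N (k + 1) → i ∉ A) then τf k (y k)
      else fun i => if i < N k then y k i else decide (i ∈ A) := fun k => rfl
  have step : ∀ k, ∀ i < N k, y (k + 1) i = y k i := by
    intro k i hi
    rw [ysucc k]
    by_cases h : (∀ i, N k ≤ i → i < N (k + 1) → i ∉ A)
    · rw [if_pos h]; exact hτa k (y k) i hi
    · rw [if_neg h]; simp [hi]
  have agree : ∀ k m, k ≤ m → ∀ i < N k, y m i = y k i := by
    intro k m hkm
    induction m with
    | zero => intro i hi; rw [Nat.le_zero.1 hkm]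
    | succ m ih =>
      rcases Nat.le_succ_iff.1 hkm with h | h
      · intro i hi
        rw [step m i (lt_of_lt_of_le hi (hNs.monotone h)), ih h i hi]
      · intro i hi; rw [h]
  set x : ℕ → Bool := fun i => y (i + 1) i with hx
  have xeq : ∀ k i, i < N (k + 1) → x i = y (k + 1) i := by
    intro k i hi
    rcases le_total (k + 1) (i + 1) with h | h
    · exact agree (k + 1) (i + 1) h i hi
    · exact (agree (i + 1) (k + 1) h i (lt_of_lt_of_le (Nat.lt_succ_self i) hNs.le_apply)).symm
  refine ⟨x, ?_, ?_⟩
  · intro i hiA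
    obtain ⟨k, hk1, hk2⟩ := find_interval hN0 hNs i
    have hnotbad : ¬ (∀ i, N k ≤ i → i < N (k + 1) → i ∉ A) := fun h => h i hk1 hk2 hiA
    rw [xeq k i hk2, ysucc k, if_neg hnotbad]
    simp [Nat.not_lt.2 hk1, hiA]
  · intro j hj
    obtain ⟨k, hkbad0, hjk⟩ := hbad.exists_gt j
    have hkbad : ∀ i, N k ≤ i → i < N (k + 1) → i ∉ A := hkbad0
    have hjk' : j ≤ k := le_of_lt hjk
    have hxk : x ∈ Cyl (τf k (y k)) (N (k + 1)) := by
      intro i hi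
      rw [xeq k i hi, ysucc k, if_pos hkbad]
    have hd := hτd k (y k)
    rw [Set.eq_empty_iff_forall_notMem] at hd
    exact hd x ⟨hxk, hMmono j k hjk' hj⟩


lemma closed_nwd_isMeagre {s : Set (ℕ → Bool)} (hc : IsClosed s) (hn : IsNowhereDense s) :
    IsMeagre s :=
  isMeagre_iff_countable_union_isNowhereDense.2
    ⟨{s}, by simpa using hn, Set.countable_singleton s, by simp⟩

/-- If every set of the filter meets all but finitely many blocks `[c m, c (m+1))`, then the
filter is meagre. -/
lemma meagre_of_blocks (F : Filter ℕ) (c : ℕ → ℕ) (hc : StrictMono c)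
    (h : ∀ A ∈ F, {m | ∀ i, c m ≤ i → i < c (m + 1) → i ∉ A}.Finite) :
    IsMeagre (filterSet F) := by
  classical
  set Nm : ℕ → Set (ℕ → Bool) :=
    fun m => {x | ∀ p, m ≤ p → ∃ i, c p ≤ i ∧ i < c (p + 1) ∧ x i = true} with hNm
  have hclosed : ∀ m, IsClosed (Nm m) := by
    intro m
    have : Nm m = ⋂ p, (if m ≤ p then
        ⋃ i ∈ Finset.Ico (c p) (c (p + 1)), {x : ℕ → Bool | x i = true} else Set.univ) := by
      ext x
      simp only [hNm, Set.mem_setOf_eq, Set.mem_iInter]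
      constructor
      · intro hx p
        by_cases hp : m ≤ p
        · rw [if_pos hp]
          obtain ⟨i, h1, h2, h3⟩ := hx p hp
          simp only [Set.mem_iUnion, Finset.mem_Ico, Set.mem_setOf_eq]
          exact ⟨i, ⟨h1, h2⟩, h3⟩
        · rw [if_neg hp]; trivial
      · intro hx p hp
        have := hx p
        rw [if_pos hp] at this
        simp only [Set.mem_iUnion, Finset.mem_Ico, Set.mem_setOf_eq] at this
        obtain ⟨i, ⟨h1, h2⟩, h3⟩ := this
        exact ⟨i, h1, h2, h3⟩
    rw [this]
    refine isClosed_iInter fun p => ?_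
    split
    · exact (Finset.Ico (c p) (c (p + 1))).finite_toSet.isClosed_biUnion
        fun i _ => isClosed_eval i true
    · exact isClosed_univ
  have hnwd : ∀ m, IsNowhereDense (Nm m) := by
    intro m
    rw [(hclosed m).isNowhereDense_iff]
    rw [Set.eq_empty_iff_forall_notMem]
    intro x hx
    obtain ⟨n, hn⟩ := exists_Cyl_subset isOpen_interior hx
    have hsub : Cyl x n ⊆ Nm m := hn.trans interior_subset
    set p := max m n with hp
    set z : ℕ → Bool := fun i => if c p ≤ i ∧ i < c (p + 1) then false else x i with hz
    have hzC : z ∈ Cyl x n := by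
      intro i hi
      have : ¬ (c p ≤ i ∧ i < c (p + 1)) := by
        rintro ⟨h1, -⟩
        have : n ≤ c p := le_trans (le_max_right m n) hc.le_apply
        omega
      show (if c p ≤ i ∧ i < c (p + 1) then false else x i) = x i
      rw [if_neg this]
    have hzN := hsub hzC p (le_max_left m n)
    obtain ⟨i, h1, h2, h3⟩ := hzN
    have : z i = false := by
      show (if c p ≤ i ∧ i < c (p + 1) then false else x i) = false
      rw [if_pos ⟨h1, h2⟩]
    rw [this] at h3; exact Bool.false_ne_true h3
  have hcov : filterSet F ⊆ ⋃ m, Nm m := by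
    intro x hx
    have hA := h _ hx
    obtain ⟨b, hb⟩ := hA.bddAbove
    refine Set.mem_iUnion.2 ⟨b + 1, fun p hp => ?_⟩
    have hpnot : ¬ (∀ i, c p ≤ i → i < c (p + 1) → i ∉ {n | x n = true}) := by
      intro hmem
      exact absurd (hb hmem) (by omega)
    push_neg at hpnot
    obtain ⟨i, h1, h2, h3⟩ := hpnot
    exact ⟨i, h1, h2, h3⟩
  exact (isMeagre_iUnion fun m => closed_nwd_isMeagre (hclosed m) (hnwd m)).mono hcov

lemma filterSet_invariant {G : Filter ℕ} (hG : G ≤ Filter.cofinite) {x y : ℕ → Bool}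
    (hfin : {i | x i ≠ y i}.Finite) (hx : x ∈ filterSet G) : y ∈ filterSet G := by
  have h1 : {i | x i = y i} ∈ G := by
    apply hG
    rw [Filter.mem_cofinite]
    have he : {i | x i = y i}ᶜ = {i | x i ≠ y i} := by ext i; simp
    rw [he]; exact hfin
  refine Filter.mem_of_superset (Filter.inter_mem hx h1) ?_
  rintro i ⟨h2, h3⟩
  have h3' : x i = y i := h3
  have h2' : x i = true := h2
  show y i = true
  rw [← h3', h2']

lemma isMeagre_preimage {f : (ℕ → Bool) → (ℕ → Bool)} (hf : Continuous f)
    (himg : ∀ σ m, ∃ τ l, Cyl τ l ⊆ f '' Cyl σ m) {M : Set (ℕ → Bool)} (hM : IsMeagre M) :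
    IsMeagre (f ⁻¹' M) := by
  obtain ⟨S, hnwd, hcnt, hcov⟩ := isMeagre_iff_countable_union_isNowhereDense.1 hM
  refine isMeagre_iff_countable_union_isNowhereDense.2
    ⟨(fun t => f ⁻¹' closure t) '' S, ?_, hcnt.image _, ?_⟩
  · rintro - ⟨t, htS, rfl⟩
    have hcl : IsClosed (f ⁻¹' closure t) := isClosed_closure.preimage hf
    rw [hcl.isNowhereDense_iff, Set.eq_empty_iff_forall_notMem]
    intro x hx
    obtain ⟨n, hn⟩ := exists_Cyl_subset isOpen_interior hx
    have hsub : f '' Cyl x n ⊆ closure t :=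
      (Set.image_subset_iff.2 (hn.trans interior_subset))
    obtain ⟨τ, l, hτ⟩ := himg x n
    exact not_Cyl_subset_nwd (hnwd t htS).closure τ l (hτ.trans hsub)
  · intro x hx
    obtain ⟨t, htS, hxt⟩ := hcov hx
    exact ⟨f ⁻¹' closure t, ⟨t, htS, rfl⟩, subset_closure hxt⟩


lemma not_isMeagre_univ : ¬ IsMeagre (Set.univ : Set (ℕ → Bool)) := by
  intro h
  rw [IsMeagre, Set.compl_univ] at h
  have := dense_of_mem_residual h
  exact Set.not_nonempty_empty (this.nonempty)

lemma meagre_of_BP {G : Filter ℕ} (hcof : G ≤ Filter.cofinite) (hproper : ∅ ∉ G)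
    (hBP : HasBaireProperty (filterSet G)) : IsMeagre (filterSet G) := by
  classical
  obtain ⟨U, M, hU, hM, heq⟩ := hBP
  by_cases hU0 : U = ∅
  · rw [hU0] at heq
    have : symmDiff (∅ : Set (ℕ → Bool)) M = M := by
      simp [symmDiff_def]
    rw [this] at heq
    rw [heq]; exact hM
  · exfalso
    obtain ⟨x₀, hx₀⟩ := Set.nonempty_iff_ne_empty.2 hU0
    obtain ⟨n, hn⟩ := exists_Cyl_subset hU hx₀
    set w : (ℕ → Bool) → (ℕ → Bool) := fun z i => if i < n then x₀ i else z i with hw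
    set v : (ℕ → Bool) → (ℕ → Bool) := fun z i => ! z i with hv
    have hwc : Continuous w := by
      refine continuous_pi fun i => ?_
      by_cases hi : i < n
      · simp only [hw, if_pos hi]; exact continuous_const
      · simp only [hw, if_neg hi]; exact continuous_apply i
    have hvc : Continuous v := by
      refine continuous_pi fun i => ?_
      show Continuous ((fun b => !b) ∘ fun z : ℕ → Bool => z i)
      exact Continuous.comp continuous_of_discreteTopology (continuous_apply i)
    -- image property for w
    have hwimg : ∀ σ m, ∃ τ l, Cyl τ l ⊆ w '' Cyl σ m := by
      intro σ m
      refine ⟨w σ, max m n, fun y hy => ?_⟩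
      refine ⟨fun i => if i < n then σ i else y i, ?_, ?_⟩
      · intro i hi
        by_cases h2 : i < n
        · simp [h2]
        · simp only [if_neg h2]
          have : y i = w σ i := hy i (lt_of_lt_of_le hi (le_max_left m n))
          rw [this]; simp [hw, h2]
      · funext i
        by_cases h2 : i < n
        · have : y i = w σ i := hy i (lt_of_lt_of_le h2 (le_max_right m n))
          simp [hw, h2, this]
        · simp [hw, h2]
    -- image property for v
    have hvimg : ∀ σ m, ∃ τ l, Cyl τ l ⊆ v '' Cyl σ m := by
      intro σ m
      refine ⟨v σ, m, fun y hy => ?_⟩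
      refine ⟨v y, fun i hi => ?_, ?_⟩
      · have : y i = v σ i := hy i hi
        simp [hv, this]
      · funext i; simp [hv]
    -- Cyl x₀ n \ M ⊆ filterSet G
    have hsub : Cyl x₀ n \ M ⊆ filterSet G := by
      rintro y ⟨hy1, hy2⟩
      rw [heq]
      exact Set.mem_symmDiff.2 (Or.inl ⟨hn hy1, hy2⟩)
    -- complement of filterSet G is contained in w ⁻¹' M
    have hcompl : (filterSet G)ᶜ ⊆ w ⁻¹' M := by
      intro z hz
      by_contra hzM
      apply hz
      have hwz : w z ∈ filterSet G := by
        apply hsub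
        refine ⟨fun i hi => by simp [hw, hi], hzM⟩
      refine filterSet_invariant hcof ?_ hwz
      apply Set.Finite.subset (Set.finite_Iio n)
      intro i hi
      simp only [Set.mem_setOf_eq, hw] at hi
      by_contra h2
      simp only [Set.mem_Iio, not_lt] at h2
      rw [if_neg (not_lt.2 h2)] at hi
      exact hi rfl
    have hm1 : IsMeagre ((filterSet G)ᶜ) :=
      (isMeagre_preimage hwc hwimg hM).mono hcompl
    have hm2 : IsMeagre (v ⁻¹' (filterSet G)ᶜ) := isMeagre_preimage hvc hvimg hm1
    -- filterSet G ∩ v ⁻¹' filterSet G = ∅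
    have hdisj : filterSet G ∩ v ⁻¹' filterSet G = ∅ := by
      rw [Set.eq_empty_iff_forall_notMem]
      rintro z ⟨hz1, hz2⟩
      have hA : {i | z i = true} ∈ G := hz1
      have hA' : {i | (! z i) = true} ∈ G := hz2
      have : {i | z i = true} ∩ {i | (! z i) = true} = ∅ := by
        rw [Set.eq_empty_iff_forall_notMem]
        rintro i ⟨h1, h2⟩
        simp only [Set.mem_setOf_eq] at h1 h2
        rw [h1] at h2; exact Bool.false_ne_true h2
      exact hproper (this ▸ Filter.inter_mem hA hA')
    apply not_isMeagre_univ
    have : (Set.univ : Set (ℕ → Bool)) ⊆ (filterSet G)ᶜ ∪ v ⁻¹' (filterSet G)ᶜ := by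
      intro z _
      by_cases h1 : z ∈ filterSet G
      · right
        intro h2
        rw [Set.eq_empty_iff_forall_notMem] at hdisj
        exact hdisj z ⟨h1, h2⟩
      · left; exact h1
    have hun : IsMeagre ((filterSet G)ᶜ ∪ v ⁻¹' (filterSet G)ᶜ) := by
      rw [IsMeagre, Set.compl_union]
      exact Filter.inter_mem hm1 hm2
    exact hun.mono this


end PlewikAux

/-- Plewik's inequality `𝔥 ≤ 𝔣_ℳ`: if `H` is a nonempty family of free filters on `ℕ`, each
without the Baire property as a subset of the Cantor space, whose intersection has the Baire
property, then there is a family `D` of at most `|H|` many open dense subsets of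
`([ℕ]^ℕ, ⊆*)` with empty intersection. -/
theorem open_dense_family_of_filters_without_BP (H : Set (Filter ℕ)) (hne : H.Nonempty)
    (hfree : ∀ F ∈ H, F.NeBot ∧ F ≤ Filter.cofinite)
    (hnbp : ∀ F ∈ H, ¬ HasBaireProperty (filterSet F))
    (hint : HasBaireProperty (⋂ F ∈ H, filterSet F)) :
    ∃ D : Set (Set (Set ℕ)),
      Cardinal.mk D ≤ Cardinal.mk H ∧
      (∀ d ∈ D, IsOpenAS d ∧ IsDenseAS d) ∧
      ⋂₀ D = ∅ := by
  classical
  set G : Filter ℕ := sSup H with hG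
  have hGcof : G ≤ Filter.cofinite := sSup_le fun F hF => (hfree F hF).2
  have hGproper : (∅ : Set ℕ) ∉ G := by
    intro h
    obtain ⟨F₀, hF₀⟩ := hne
    have hmem := Filter.mem_sSup.1 h F₀ hF₀
    haveI := (hfree F₀ hF₀).1
    exact Filter.empty_notMem F₀ hmem
  have hGset : filterSet G = ⋂ F ∈ H, filterSet F := by
    ext x
    simp [filterSet, hG, Filter.mem_sSup]
  have hGBP : HasBaireProperty (filterSet G) := by rw [hGset]; exact hint
  have hGmeagre := PlewikAux.meagre_of_BP hGcof hGproper hGBP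
  obtain ⟨M, hMc, hMn, hMmono, hMcov⟩ := PlewikAux.meagre_cover hGmeagre
  obtain ⟨N, hN0, hNs, havoid⟩ := PlewikAux.exists_seq M hMc hMn
  have hGkey : ∀ A ∈ G, {k | ∀ i, N k ≤ i → i < N (k + 1) → i ∉ A}.Finite := by
    intro A hA
    by_contra hinf
    obtain ⟨x, hx1, hx2⟩ := PlewikAux.exists_avoid_all hMmono hN0 hNs havoid A hinf
    have hB : {i | x i = true} ∈ G := Filter.mem_of_superset hA fun i hi => hx1 i hi
    obtain ⟨j, hj⟩ := Set.mem_iUnion.1 (hMcov hB)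
    exact hx2 j hj
  refine ⟨(fun F : Filter ℕ =>
      {x : Set ℕ | x.Infinite ∧ ∃ A ∈ F, ∀ k ∈ x, ∀ i, N k ≤ i → i < N (k + 1) → i ∉ A}) '' H,
    Cardinal.mk_image_le, ?_, ?_⟩
  · rintro d ⟨F, hFH, rfl⟩
    refine ⟨⟨fun x hx => hx.1, ?_⟩, ?_⟩
    · -- open
      rintro y ⟨hyinf, A, hAF, hAav⟩ x hxinf hxy
      set S : Set ℕ := ⋃ k ∈ (x \ y), Set.Ico (N k) (N (k + 1)) with hS
      have hSfin : S.Finite := hxy.biUnion fun k _ => Set.finite_Ico _ _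
      refine ⟨hxinf, A \ S, ?_, ?_⟩
      · rw [Set.diff_eq]
        refine Filter.inter_mem hAF ((hfree F hFH).2 ?_)
        rw [Filter.mem_cofinite, compl_compl]
        exact hSfin
      · intro k hk i h1 h2 hiA
        by_cases hky : k ∈ y
        · exact hAav k hky i h1 h2 hiA.1
        · exact hiA.2 (Set.mem_biUnion ⟨hk, hky⟩ ⟨h1, h2⟩)
    · -- dense
      intro x hxinf
      choose nxt hnx1 hnx2 using fun n => hxinf.exists_gt n
      set e : ℕ → ℕ := fun m => Nat.rec 0 (fun _ em => nxt em + 1) m with he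
      have hesucc : ∀ m, e (m + 1) = nxt (e m) + 1 := fun m => rfl
      have hemono : StrictMono e := strictMono_nat_of_lt_succ fun m => by
        rw [hesucc]; exact Nat.lt_succ_of_lt (hnx2 (e m))
      have hFkey : ∃ A ∈ F, {m | ∀ i, N (e m) ≤ i → i < N (e (m + 1)) → i ∉ A}.Infinite := by
        by_contra hcon
        push_neg at hcon
        have hmeag := PlewikAux.meagre_of_blocks F (fun m => N (e m))
          (fun a b hab => hNs (hemono hab))
          (fun A hA => hcon A hA)
        exact hnbp F hFH ⟨∅, filterSet F, isOpen_empty, hmeag, by simp [symmDiff_def]⟩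
      obtain ⟨A, hAF, hAinf⟩ := hFkey
      set kf : ℕ → ℕ := fun m => nxt (e m) with hkf
      have hkmono : StrictMono kf := strictMono_nat_of_lt_succ fun m => by
        have h1 : kf m + 1 = e (m + 1) := (hesucc m).symm
        have h2 : e (m + 1) < nxt (e (m + 1)) + 1 := Nat.lt_succ_of_lt (hnx2 _)
        have h0 : kf (m + 1) = nxt (e (m + 1)) := rfl
        omega
      refine ⟨kf '' {m | ∀ i, N (e m) ≤ i → i < N (e (m + 1)) → i ∉ A},
        ⟨hAinf.image hkmono.injective.injOn, A, hAF, ?_⟩, hAinf.image hkmono.injective.injOn, ?_⟩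
      · rintro k ⟨m, hm, rfl⟩ i h1 h2
        refine hm i (le_trans (hNs.monotone (le_of_lt (hnx2 (e m)))) h1) ?_
        have h3 : kf m + 1 = e (m + 1) := (hesucc m).symm
        rw [← h3]
        exact h2
      · have hsub : kf '' {m | ∀ i, N (e m) ≤ i → i < N (e (m + 1)) → i ∉ A} ⊆ x := by
          rintro k ⟨m, hm, rfl⟩
          exact hnx1 (e m)
        rw [AlmostSubset, Set.diff_eq_empty.2 hsub]
        exact Set.finite_empty
  · rw [Set.eq_empty_iff_forall_notMem]
    intro x hx
    obtain ⟨F₀, hF₀⟩ := hne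
    have hx0 := hx _ ⟨F₀, hF₀, rfl⟩
    have hxinf : x.Infinite := hx0.1
    have hB : ∀ F ∈ H, {i | ∀ k ∈ x, ¬ (N k ≤ i ∧ i < N (k + 1))} ∈ F := by
      intro F hF
      obtain ⟨-, A, hAF, hAav⟩ := hx _ ⟨F, hF, rfl⟩
      refine Filter.mem_of_superset hAF fun i hiA => ?_
      rintro k hk ⟨h1, h2⟩
      exact hAav k hk i h1 h2 hiA
    have hBG : {i | ∀ k ∈ x, ¬ (N k ≤ i ∧ i < N (k + 1))} ∈ G := Filter.mem_sSup.2 hB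
    have hfin := hGkey _ hBG
    refine hxinf (hfin.subset ?_)
    intro k hk
    intro i h1 h2 hi
    exact hi k hk ⟨h1, h2⟩
end

section
/- Let D ⊆ ℕ^ℕ be a dominating family, i.e. for every f : ℕ → ℕ there exists g ∈ D with f(n) ≤ g(n) for all but finitely many n. Then there exists a family H of free filters on ℕ with |H| ≤ |D| such that each member of H, as a subset of 2^ℕ, does not have the Baire property, while the intersection ⋂H is meager. (This expresses Plewik's inequality 𝔣_ℳ ≤ 𝔡.) -/
open Filter Set

lemma IsNowhereDense.isMeagre' {X : Type*} [TopologicalSpace X] {s : Set X}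
    (hs : IsNowhereDense s) : IsMeagre s :=
  isMeagre_iff_countable_union_isNowhereDense.mpr
    ⟨{s}, by simpa using hs, countable_singleton _, by simp⟩

lemma IsMeagre.union' {X : Type*} [TopologicalSpace X] {s t : Set X}
    (hs : IsMeagre s) (ht : IsMeagre t) : IsMeagre (s ∪ t) := by
  rw [IsMeagre, compl_union]; exact inter_mem hs ht

lemma isMeagre_iUnion_finite {X : Type*} [TopologicalSpace X] {ι : Type*} [Finite ι]
    {f : ι → Set X} (hf : ∀ i, IsMeagre (f i)) : IsMeagre (⋃ i, f i) := by
  classical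
  cases nonempty_fintype ι
  have : ∀ (s : Finset ι), IsMeagre (⋃ i ∈ s, f i) := by
    intro s
    induction s using Finset.induction_on with
    | empty => simpa using (isNowhereDense_empty (X := X)).isMeagre'
    | @insert a s' _ ih => rw [Finset.set_biUnion_insert]; exact (hf a).union' ih
  have h2 := this Finset.univ
  simpa using h2

lemma IsMeagre.interior_eq_empty {X : Type*} [TopologicalSpace X] [BaireSpace X]
    {s : Set X} (hs : IsMeagre s) : interior s = ∅ := by
  rw [interior_eq_empty_iff_dense_compl]
  exact dense_of_mem_residual hs

section Avoid

/-- the override map -/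
noncomputable def ovr (m₀ : ℕ) (v : Fin m₀ → Bool) (x : ℕ → Bool) : ℕ → Bool :=
  fun n => if h : n < m₀ then v ⟨n, h⟩ else x n

lemma continuous_ovr (m₀ : ℕ) (v : Fin m₀ → Bool) : Continuous (ovr m₀ v) := by
  apply continuous_pi
  intro n
  by_cases h : n < m₀ <;> simp only [ovr, h, dif_pos, dif_neg, not_false_iff]
  · exact continuous_const
  · exact continuous_apply n

lemma avoid {C : Set (ℕ → Bool)} (hC : IsClosed C) (hm : IsMeagre C) (m₀ : ℕ) :
    ∃ m₁, m₀ < m₁ ∧ ∃ t : ℕ → Bool,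
      ∀ y : ℕ → Bool, (∀ n, m₀ ≤ n → n < m₁ → y n = t n) → y ∉ C := by
  classical
  set Cv : (Fin m₀ → Bool) → Set (ℕ → Bool) := fun v => (ovr m₀ v) ⁻¹' C with hCv
  have hCvClosed : ∀ v, IsClosed (Cv v) := fun v => hC.preimage (continuous_ovr m₀ v)
  -- each Cv v is meagre
  have hCvMeagre : ∀ v, IsMeagre (Cv v) := by
    intro v
    refine ((hCvClosed v).isNowhereDense_iff.mpr ?_).isMeagre'
    by_contra hne
    obtain ⟨x, hx⟩ := nonempty_iff_ne_empty.mpr hne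
    obtain ⟨I, u, hu, hpi⟩ := isOpen_pi_iff.mp isOpen_interior x hx
    -- the open set O
    set O : Set (ℕ → Bool) :=
      {p | (∀ i ∈ I, m₀ ≤ i → p i = x i) ∧ ∀ (n : Fin m₀), p n = v n} with hO
    have hOopen : IsOpen O := by
      have h1 : IsOpen {p : ℕ → Bool | ∀ i ∈ I, m₀ ≤ i → p i = x i} := by
        have : {p : ℕ → Bool | ∀ i ∈ I, m₀ ≤ i → p i = x i}
            = ⋂ i ∈ I, {p : ℕ → Bool | m₀ ≤ i → p i = x i} := by
          ext p; simp
        rw [this]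
        refine isOpen_biInter_finset fun i _ => ?_
        by_cases h : m₀ ≤ i
        · simp only [h, forall_true_left]
          show IsOpen ((fun p : ℕ → Bool => p i) ⁻¹' {x i})
          exact (continuous_apply i).isOpen_preimage _ (isOpen_discrete _)
        · simp only [h, false_implies]
          simpa using isOpen_univ
      have h2 : IsOpen {p : ℕ → Bool | ∀ (n : Fin m₀), p n = v n} := by
        have : {p : ℕ → Bool | ∀ (n : Fin m₀), p n = v n}
            = ⋂ (n : Fin m₀), {p : ℕ → Bool | p n = v n} := by ext p; simp
        rw [this]
        refine isOpen_iInter_of_finite fun n => ?_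
        show IsOpen ((fun p : ℕ → Bool => p (n : ℕ)) ⁻¹' {v n})
        exact (continuous_apply (n : ℕ)).isOpen_preimage _ (isOpen_discrete _)
      exact h1.inter h2
    have hOC : O ⊆ C := by
      intro p hp
      have hp' : (fun n => if n < m₀ then x n else p n) ∈ Set.pi ↑I u := by
        intro i hi
        by_cases h : i < m₀
        · simpa [h] using (hu i hi).2
        · have := hp.1 i hi (not_lt.mp h)
          simpa [h, this] using (hu i hi).2
      have hmem := interior_subset (hpi hp')
      have heq : ovr m₀ v (fun n => if n < m₀ then x n else p n) = p := by
        funext n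
        by_cases h : n < m₀
        · simp [ovr, h, (hp.2 ⟨n, h⟩).symm]
        · simp [ovr, h]
      rw [hCv, mem_preimage, heq] at hmem
      exact hmem
    have hOne : O.Nonempty := by
      refine ⟨ovr m₀ v x, fun i _ hi => ?_, fun n => ?_⟩
      · simp [ovr, not_lt.mpr hi]
      · simp [ovr, n.2]
    rw [← hOopen.subset_interior_iff] at hOC
    rw [hm.interior_eq_empty] at hOC
    exact hOne.mono hOC |>.ne_empty rfl
  -- the union
  set Cstar : Set (ℕ → Bool) := ⋃ v : Fin m₀ → Bool, Cv v with hCstar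
  have hCsClosed : IsClosed Cstar := isClosed_iUnion_of_finite hCvClosed
  have hCsMeagre : IsMeagre Cstar := isMeagre_iUnion_finite hCvMeagre
  have hd : Dense Cstarᶜ := by
    rw [← interior_eq_empty_iff_dense_compl]
    exact hCsMeagre.interior_eq_empty
  obtain ⟨x₀, hx₀⟩ := hd.nonempty
  obtain ⟨I, u, hu, hpi⟩ := isOpen_pi_iff.mp hCsClosed.isOpen_compl x₀ hx₀
  refine ⟨max (m₀ + 1) (I.sup id + 1), lt_of_lt_of_le (Nat.lt_succ_self m₀) (le_max_left _ _),
    x₀, fun y hy hyC => ?_⟩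
  set y' : ℕ → Bool := fun n => if n < m₀ then x₀ n else y n with hy'
  have hy'pi : y' ∈ Set.pi ↑I u := by
    intro i hi
    by_cases h : i < m₀
    · simpa [hy', h] using (hu i hi).2
    · have hilt : i < max (m₀ + 1) (I.sup id + 1) :=
        lt_of_le_of_lt (Finset.le_sup (f := id) hi)
          (lt_of_lt_of_le (Nat.lt_succ_self _) (le_max_right _ _))
      have := hy i (not_lt.mp h) hilt
      simpa [hy', h, this] using (hu i hi).2
  have hy'mem : y' ∈ Cstarᶜ := hpi hy'pi
  apply hy'mem
  refine mem_iUnion.mpr ⟨fun j => y j, ?_⟩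
  show ovr m₀ _ y' ∈ C
  have : ovr m₀ (fun j : Fin m₀ => y j) y' = y := by
    funext n
    by_cases h : n < m₀ <;> simp [ovr, hy', h]
  rwa [this]

end Avoid


noncomputable def aSeq (g : ℕ → ℕ) : ℕ → ℕ
  | 0 => 0
  | k+1 => max (aSeq g k) (g (aSeq g k)) + 1

lemma aSeq_strictMono (g : ℕ → ℕ) : StrictMono (aSeq g) :=
  strictMono_nat_of_lt_succ fun k =>
    lt_of_le_of_lt (le_max_left _ _) (Nat.lt_succ_self _)

lemma le_aSeq (g : ℕ → ℕ) (k : ℕ) : k ≤ aSeq g k := (aSeq_strictMono g).le_apply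

lemma g_aSeq_lt (g : ℕ → ℕ) (k : ℕ) : g (aSeq g k) < aSeq g (k + 1) :=
  lt_of_le_of_lt (le_max_right _ _) (Nat.lt_succ_self _)

section IdxOf
noncomputable def idxOf (a : ℕ → ℕ) (n : ℕ) : ℕ := Nat.findGreatest (fun k => a k ≤ n) n

variable {a : ℕ → ℕ} (h0 : a 0 = 0) (hmono : StrictMono a)
include h0 hmono

lemma aSeq_idxOf_le (n : ℕ) : a (idxOf a n) ≤ n := by
  classical
  have := Nat.findGreatest_spec (P := fun k => a k ≤ n) (Nat.zero_le n) (by simp [h0])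
  exact this

lemma le_idxOf {k n : ℕ} (h : a k ≤ n) : k ≤ idxOf a n := by
  have hk : k ≤ n := le_trans hmono.le_apply h
  unfold idxOf
  exact Nat.le_findGreatest hk h

lemma lt_aSeq_idxOf_succ (n : ℕ) : n < a (idxOf a n + 1) := by
  by_contra hcon
  have := le_idxOf h0 hmono (not_lt.mp hcon)
  omega

lemma idxOf_eq {j n : ℕ} (h1 : a j ≤ n) (h2 : n < a (j + 1)) : idxOf a n = j := by
  have hle : j ≤ idxOf a n := le_idxOf h0 hmono h1
  have : idxOf a n < j + 1 := by
    by_contra hcon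
    have := hmono.monotone (not_lt.mp hcon)
    have := aSeq_idxOf_le h0 hmono n
    omega
  omega

end IdxOf

/-- interval of block `k` -/
noncomputable def blk (g : ℕ → ℕ) (k : ℕ) : Set ℕ := Set.Ico (aSeq g k) (aSeq g (k+1))

/-- the block-sum filter -/
noncomputable def Fg (g : ℕ → ℕ) : Filter ℕ :=
  Filter.bind (Filter.hyperfilter ℕ) (fun k => Filter.principal (blk g k))

lemma mem_Fg {g : ℕ → ℕ} {A : Set ℕ} :
    A ∈ Fg g ↔ {k | blk g k ⊆ A} ∈ Filter.hyperfilter ℕ := by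
  rw [Fg, Filter.mem_bind']
  simp only [Filter.mem_principal, Ultrafilter.mem_coe]

lemma hyper_infinite {s : Set ℕ} (hs : s ∈ Filter.hyperfilter ℕ) : s.Infinite := by
  intro hfin
  have h2 : sᶜ ∈ Filter.hyperfilter ℕ :=
    Filter.hyperfilter_le_cofinite (by simpa [Filter.mem_cofinite] using hfin)
  have : (∅ : Set ℕ) ∈ Filter.hyperfilter ℕ := by
    have := Filter.inter_mem hs h2
    simpa using this
  exact (Filter.empty_notMem _) this

instance Fg_neBot (g : ℕ → ℕ) : (Fg g).NeBot := by
  rw [Filter.neBot_iff]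
  intro hbot
  have : (∅ : Set ℕ) ∈ Fg g := by rw [hbot]; trivial
  rw [mem_Fg] at this
  have hinf := hyper_infinite this
  have : {k | blk g k ⊆ (∅ : Set ℕ)} = ∅ := by
    ext k
    simp only [mem_setOf_eq, subset_empty_iff, mem_empty_iff_false, iff_false]
    intro h
    have : aSeq g k ∈ blk g k := by
      simp [blk, aSeq_strictMono g (Nat.lt_succ_self k)]
    simp [h] at this
  rw [this] at hinf
  exact hinf finite_empty

lemma Fg_le_cofinite (g : ℕ → ℕ) : Fg g ≤ Filter.cofinite := by
  intro A hA
  rw [Filter.mem_cofinite] at hA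
  obtain ⟨N, hN⟩ := hA.bddAbove
  rw [mem_Fg]
  have hsub : {k | N + 1 ≤ k} ⊆ {k | blk g k ⊆ A} := by
    intro k hk n hn
    by_contra hnA
    have hk' : N + 1 ≤ k := hk
    have : n ≤ N := hN hnA
    have h1 : aSeq g k ≤ n := hn.1
    have h2 : k ≤ aSeq g k := le_aSeq g k
    omega
  refine Filter.mem_of_superset ?_ hsub
  apply Filter.hyperfilter_le_cofinite
  rw [Filter.mem_cofinite]
  have : {k | N + 1 ≤ k}ᶜ = {k | k < N + 1} := by ext k; simp [not_le]
  rw [this]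
  exact Set.finite_lt_nat _

set_option maxHeartbeats 2000000 in
theorem Fg_not_meagre (g : ℕ → ℕ) : ¬ IsMeagre (filterSet (Fg g)) := by
  classical
  intro hmg
  obtain ⟨S, hSnwd, hScnt, hScov⟩ := isMeagre_iff_countable_union_isNowhereDense.mp hmg
  obtain ⟨f, hf⟩ := (hScnt.insert ∅).exists_eq_range (insert_nonempty _ _)
  have hfnwd : ∀ i, IsNowhereDense (f i) := by
    intro i
    have : f i ∈ insert ∅ S := hf ▸ mem_range_self i
    rcases this with h | h
    · rw [h]; exact isNowhereDense_empty
    · exact hSnwd _ h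
  set C : ℕ → Set (ℕ → Bool) := fun j => ⋃ i ∈ Finset.range (j+1), closure (f i) with hCdef
  have hCclosed : ∀ j, IsClosed (C j) := fun j =>
    isClosed_biUnion_finset fun i _ => isClosed_closure
  have hCmeagre : ∀ j, IsMeagre (C j) := by
    intro j
    show IsMeagre (⋃ i ∈ Finset.range (j+1), closure (f i))
    rw [← Finset.set_biUnion_coe]
    refine (fun h1 h2 => IsMeagre.mono h2 h1) (isMeagre_iUnion_finite (ι := (Finset.range (j+1) : Finset ℕ))
      (f := fun i => closure (f i)) ?_) ?_
    · exact fun i => ((hfnwd i).closure).isMeagre'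
    · intro x hx
      simp only [mem_iUnion] at hx ⊢
      obtain ⟨i, hi, hxi⟩ := hx
      exact ⟨⟨i, hi⟩, hxi⟩
  have hCmono : ∀ {j j'}, j ≤ j' → C j ⊆ C j' := by
    intro j j' hjj x hx
    simp only [hCdef, mem_iUnion, Finset.mem_range] at hx ⊢
    obtain ⟨i, hi, h⟩ := hx
    exact ⟨i, by omega, h⟩
  have hCcov : filterSet (Fg g) ⊆ ⋃ j, C j := by
    intro x hx
    obtain ⟨s, hsS, hxs⟩ := hScov hx
    obtain ⟨i, hi⟩ : s ∈ range f := hf ▸ (mem_insert_iff.mpr (Or.inr hsS))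
    refine mem_iUnion.mpr ⟨i, ?_⟩
    simp only [hCdef, mem_iUnion, Finset.mem_range]
    exact ⟨i, by omega, subset_closure (by rw [hi]; exact hxs)⟩
  -- build the interval sequence m and patterns t
  have av : ∀ j m₀, ∃ m₁, m₀ < m₁ ∧ ∃ t : ℕ → Bool,
      ∀ y : ℕ → Bool, (∀ n, m₀ ≤ n → n < m₁ → y n = t n) → y ∉ C j :=
    fun j m₀ => avoid (hCclosed j) (hCmeagre j) m₀
  set m : ℕ → ℕ := fun j => Nat.rec 0 (fun j mj => (av j mj).choose) j with hmdef
  have hmsucc : ∀ j, m (j+1) = (av j (m j)).choose := fun j => rfl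
  have hmlt : ∀ j, m j < m (j+1) := fun j => by rw [hmsucc]; exact (av j (m j)).choose_spec.1
  have hmmono : StrictMono m := strictMono_nat_of_lt_succ hmlt
  have hm0 : m 0 = 0 := rfl
  set t : ℕ → ℕ → Bool := fun j => (av j (m j)).choose_spec.2.choose with htdef
  have ht : ∀ j (y : ℕ → Bool), (∀ n, m j ≤ n → n < m (j+1) → y n = t j n) → y ∉ C j :=
    fun j => (av j (m j)).choose_spec.2.choose_spec
  have haS0 : aSeq g 0 = 0 := rfl
  have haSmono := aSeq_strictMono g
  -- the sparse subsequence e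
  set e : ℕ → ℕ := fun i =>
    Nat.rec 0 (fun _ ei => max (ei + 1) (aSeq g (idxOf (aSeq g) (m (ei + 1)) + 1))) i with hedef
  have hesucc : ∀ i, e (i+1) = max (e i + 1) (aSeq g (idxOf (aSeq g) (m (e i + 1)) + 1)) :=
    fun i => rfl
  have helt : ∀ i, e i < e (i+1) := fun i => by
    rw [hesucc]; exact lt_of_lt_of_le (Nat.lt_succ_self _) (le_max_left _ _)
  have hemono : StrictMono e := strictMono_nat_of_lt_succ helt
  have hekey : ∀ i, aSeq g (idxOf (aSeq g) (m (e i + 1)) + 1) ≤ m (e (i+1)) := by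
    intro i
    have h1 : aSeq g (idxOf (aSeq g) (m (e i + 1)) + 1) ≤ e (i+1) := by
      rw [hesucc]; exact le_max_right _ _
    exact le_trans h1 hmmono.le_apply
  set Bad : ℕ → Set ℕ := fun i => {k | (blk g k ∩ Ico (m (e i)) (m (e i + 1))).Nonempty}
    with hBaddef
  -- disjointness of block hit-sets along e
  have hdisj : ∀ i i' k, i < i' → k ∈ Bad i → k ∈ Bad i' → False := by
    intro i i' k hii hne hne'
    obtain ⟨n, hn⟩ : (blk g k ∩ Ico (m (e i)) (m (e i + 1))).Nonempty := hne
    obtain ⟨n', hn'⟩ : (blk g k ∩ Ico (m (e i')) (m (e i' + 1))).Nonempty := hne'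
    have hak : aSeq g k ≤ n := hn.1.1
    have h1 : aSeq g k ≤ m (e i + 1) := le_of_lt (lt_of_le_of_lt hak hn.2.2)
    have hkK : k ≤ idxOf (aSeq g) (m (e i + 1)) := le_idxOf haS0 haSmono h1
    have h2 : aSeq g (k+1) ≤ aSeq g (idxOf (aSeq g) (m (e i + 1)) + 1) :=
      haSmono.monotone (Nat.succ_le_succ hkK)
    have h3 := hekey i
    have h4 : m (e (i+1)) ≤ m (e i') :=
      hmmono.monotone (hemono.monotone (show i + 1 ≤ i' from hii))
    have h5 : n' < aSeq g (k+1) := hn'.1.2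
    have h6 : m (e i') ≤ n' := hn'.2.1
    omega
  -- choose the parity escaping the ultrafilter
  have hpar : ∃ par ≤ 1, (⋃ i, Bad (2*i+par))ᶜ ∈ Filter.hyperfilter ℕ := by
    by_cases h : (⋃ i, Bad (2*i)) ∈ Filter.hyperfilter ℕ
    · refine ⟨1, le_refl 1, ?_⟩
      refine Filter.mem_of_superset h ?_
      intro k hk
      simp only [mem_iUnion] at hk
      obtain ⟨i, hi⟩ := hk
      simp only [mem_compl_iff, mem_iUnion, not_exists]
      intro i' hi'
      rcases Nat.lt_or_ge (2*i) (2*i'+1) with hlt | hge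
      · exact hdisj _ _ k hlt hi hi'
      · exact hdisj (2*i'+1) (2*i) k (by omega) hi' hi
    · exact ⟨0, Nat.zero_le 1, (Ultrafilter.compl_mem_iff_notMem).mpr h⟩
  obtain ⟨par, _, hW⟩ := hpar
  set φ : ℕ → ℕ := fun i => 2*i + par with hφdef
  have hφge : ∀ i, i ≤ φ i := fun i => by simp only [hφdef]; omega
  set W : Set ℕ := (⋃ i, Bad (φ i))ᶜ with hWdef
  set A : Set ℕ := ⋃ k ∈ W, blk g k with hAdef
  have hAmem : A ∈ Fg g := by
    rw [mem_Fg]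
    refine Filter.mem_of_superset hW ?_
    intro k hk
    exact fun n hn => mem_iUnion₂.mpr ⟨k, hk, hn⟩
  have hAmiss : ∀ i, A ∩ Ico (m (e (φ i))) (m (e (φ i) + 1)) = ∅ := by
    intro i
    rw [eq_empty_iff_forall_notMem]
    rintro n ⟨hnA, hnI⟩
    obtain ⟨k, hkW, hnk⟩ := mem_iUnion₂.mp hnA
    have : k ∈ Bad (φ i) := ⟨n, hnk, hnI⟩
    exact hkW (mem_iUnion.mpr ⟨i, this⟩)
  -- the witness point
  set x : ℕ → Bool := fun n =>
    if (∃ i, idxOf m n = e (φ i)) then t (idxOf m n) n else decide (n ∈ A) with hxdef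
  have hsupp : A ⊆ {n | x n = true} := by
    intro n hnA
    by_cases hex : ∃ i, idxOf m n = e (φ i)
    · obtain ⟨i, hi⟩ := hex
      exfalso
      have h1 : m (idxOf m n) ≤ n := aSeq_idxOf_le hm0 hmmono n
      have h2 : n < m (idxOf m n + 1) := lt_aSeq_idxOf_succ hm0 hmmono n
      rw [hi] at h1 h2
      have : n ∈ A ∩ Ico (m (e (φ i))) (m (e (φ i) + 1)) := ⟨hnA, h1, h2⟩
      rw [hAmiss i] at this
      exact this
    · show x n = true
      rw [hxdef]
      simp only [hex, if_false]
      exact decide_eq_true hnA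
  have hxmem : x ∈ filterSet (Fg g) := by
    show {n | x n = true} ∈ Fg g
    exact Filter.mem_of_superset hAmem hsupp
  obtain ⟨j₀, hj₀⟩ := mem_iUnion.mp (hCcov hxmem)
  -- derive the contradiction
  set j : ℕ := e (φ j₀) with hjdef
  have hjge : j₀ ≤ j := le_trans (hφge j₀) (le_trans (hemono.le_apply) (le_refl _))
  have hagree : ∀ n, m j ≤ n → n < m (j+1) → x n = t j n := by
    intro n h1 h2
    have hidx : idxOf m n = j := idxOf_eq hm0 hmmono h1 h2
    rw [hxdef]
    simp only [hidx]
    rw [if_pos ⟨j₀, rfl⟩]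
  exact ht j x hagree (hCmono hjge hj₀)


/-- xor with a fixed mask, as a homeomorphism of Cantor space -/
def xorMask (mask : ℕ → Bool) : (ℕ → Bool) ≃ₜ (ℕ → Bool) where
  toFun x := fun n => xor (x n) (mask n)
  invFun x := fun n => xor (x n) (mask n)
  left_inv x := by funext n; cases hx : x n <;> cases hm : mask n <;> simp [hx, hm]
  right_inv x := by funext n; cases hx : x n <;> cases hm : mask n <;> simp [hx, hm]
  continuous_toFun := continuous_pi fun n =>
    (continuous_of_discreteTopology (f := fun b => xor b (mask n))).comp (continuous_apply n)
  continuous_invFun := continuous_pi fun n =>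
    (continuous_of_discreteTopology (f := fun b => xor b (mask n))).comp (continuous_apply n)

lemma Homeomorph.isMeagre_preimage {X Y : Type*} [TopologicalSpace X] [TopologicalSpace Y]
    (h : X ≃ₜ Y) {s : Set Y} (hs : IsMeagre s) : IsMeagre (h ⁻¹' s) := by
  rw [isMeagre_iff_countable_union_isNowhereDense] at hs ⊢
  obtain ⟨S, hnwd, hcnt, hsub⟩ := hs
  refine ⟨(fun t => h ⁻¹' t) '' S, ?_, hcnt.image _, ?_⟩
  · rintro t ⟨u, hu, rfl⟩
    have := hnwd u hu
    unfold IsNowhereDense at this ⊢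
    rw [← h.preimage_closure, ← h.preimage_interior, this, preimage_empty]
  · intro x hx
    obtain ⟨u, hu, hxu⟩ := hsub hx
    exact ⟨h ⁻¹' u, mem_image_of_mem _ hu, hxu⟩

lemma xorMask_apply (mask x : ℕ → Bool) (n : ℕ) : xorMask mask x n = xor (x n) (mask n) := rfl

lemma filterSet_invariant {F : Filter ℕ} (hco : F ≤ Filter.cofinite)
    {mask : ℕ → Bool} (hmask : {n | mask n = true}.Finite) (x : ℕ → Bool) :
    x ∈ filterSet F ↔ xorMask mask x ∈ filterSet F := by
  have key : ∀ y : ℕ → Bool, y ∈ filterSet F → xorMask mask y ∈ filterSet F := by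
    intro y hy
    have h1 : {n | mask n = true}ᶜ ∈ F := hco (by simpa [Filter.mem_cofinite] using hmask)
    have h2 : {n | y n = true} ∩ {n | mask n = true}ᶜ ⊆ {n | xorMask mask y n = true} := by
      intro n hn
      have hyn : y n = true := hn.1
      have hmn : mask n = false := by
        have := hn.2
        simp only [mem_compl_iff, mem_setOf_eq, Bool.not_eq_true] at this
        exact this
      show xor (y n) (mask n) = true
      rw [hyn, hmn]; rfl
    exact Filter.mem_of_superset (Filter.inter_mem hy h1) h2
  constructor
  · exact key x
  · intro h
    have := key _ h
    have heq : xorMask mask (xorMask mask x) = x := (xorMask mask).left_inv x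
    rwa [heq] at this

theorem no_BP (F : Filter ℕ) (hne : F.NeBot) (hco : F ≤ Filter.cofinite)
    (hnm : ¬ IsMeagre (filterSet F)) : ¬ HasBaireProperty (filterSet F) := by
  classical
  rintro ⟨U, M, hU, hM, hEq⟩
  rcases eq_empty_or_nonempty U with hUe | ⟨x₀, hx₀⟩
  · apply hnm
    rw [hEq, hUe]
    have : symmDiff (∅ : Set (ℕ → Bool)) M = M := by
      rw [Set.symmDiff_def]; simp
    rw [this]; exact hM
  · obtain ⟨I, u, hu, hpi⟩ := isOpen_pi_iff.mp hU x₀ hx₀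
    -- the cylinder around x₀ determined by I
    have hcyl : {p : ℕ → Bool | ∀ i ∈ I, p i = x₀ i} ⊆ U := by
      intro p hp
      apply hpi
      intro i hi
      rw [hp i hi]
      exact (hu i hi).2
    have hcylM : {p : ℕ → Bool | ∀ i ∈ I, p i = x₀ i} ∩ (filterSet F)ᶜ ⊆ M := by
      rintro p ⟨hp1, hp2⟩
      by_contra hpM
      have : p ∈ symmDiff U M := Or.inl ⟨hcyl hp1, hpM⟩
      rw [← hEq] at this
      exact hp2 this
    -- masks indexed by functions on I
    set maskOf : ({n // n ∈ I} → Bool) → (ℕ → Bool) :=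
      fun v n => if h : n ∈ I then v ⟨n, h⟩ else false with hmaskdef
    have hmaskfin : ∀ v, {n | maskOf v n = true}.Finite := by
      intro v
      apply Set.Finite.subset I.finite_toSet
      intro n hn
      simp only [hmaskdef, mem_setOf_eq] at hn
      by_contra hnI
      have hnI' : n ∉ I := by simpa using hnI
      rw [dif_neg hnI'] at hn
      exact Bool.false_ne_true hn
    have hcover : (filterSet F)ᶜ ⊆ ⋃ v : ({n // n ∈ I} → Bool), (xorMask (maskOf v)) ⁻¹' M := by
      intro x hx
      set v : {n // n ∈ I} → Bool := fun i => xor (x i) (x₀ i) with hvdef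
      refine mem_iUnion.mpr ⟨v, ?_⟩
      have hy1 : xorMask (maskOf v) x ∈ {p : ℕ → Bool | ∀ i ∈ I, p i = x₀ i} := by
        intro i hi
        rw [xorMask_apply]
        simp only [hmaskdef, hvdef, dif_pos hi]
        cases hxi : x i <;> cases hx0i : x₀ i <;> simp [hxi, hx0i]
      have hy2 : xorMask (maskOf v) x ∈ (filterSet F)ᶜ := by
        intro hmem
        exact hx ((filterSet_invariant hco (hmaskfin v) x).mpr hmem)
      exact hcylM ⟨hy1, hy2⟩
    have hcomeager : IsMeagre (filterSet F)ᶜ := by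
      refine IsMeagre.mono hcover ?_
      exact isMeagre_iUnion_finite fun v => (xorMask (maskOf v)).isMeagre_preimage hM
    -- flip everything
    set flip : (ℕ → Bool) ≃ₜ (ℕ → Bool) := xorMask (fun _ => true) with hflipdef
    have hdisj : filterSet F ∩ flip ⁻¹' (filterSet F) = ∅ := by
      rw [eq_empty_iff_forall_notMem]
      rintro x ⟨hx1, hx2⟩
      have hx2' : {n | flip x n = true} ∈ F := hx2
      have hset : {n | flip x n = true} = {n | x n = true}ᶜ := by
        ext n
        simp only [hflipdef, mem_setOf_eq, mem_compl_iff, xorMask_apply, Bool.xor_true,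
          Bool.not_eq_true', Bool.not_eq_true]
      rw [hset] at hx2'
      have : (∅ : Set ℕ) ∈ F := by
        have := Filter.inter_mem hx1 hx2'
        simpa using this
      exact hne.ne (Filter.empty_mem_iff_bot.mp this)
    have hflipco : IsMeagre (flip ⁻¹' (filterSet F))ᶜ := by
      have : (flip ⁻¹' (filterSet F))ᶜ = flip ⁻¹' (filterSet F)ᶜ := by
        rw [Set.preimage_compl]
      rw [this]
      exact flip.isMeagre_preimage hcomeager
    have huniv : IsMeagre (univ : Set (ℕ → Bool)) := by
      have : (univ : Set (ℕ → Bool)) = (filterSet F)ᶜ ∪ (flip ⁻¹' (filterSet F))ᶜ := by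
        rw [← compl_inter, hdisj, compl_empty]
      rw [this]
      exact hcomeager.union' hflipco
    have : Dense ((univ : Set (ℕ → Bool))ᶜ) := dense_of_mem_residual huniv
    rw [compl_univ] at this
    exact Set.not_nonempty_empty this.nonempty

/-- the set of eventually-true sequences is meagre -/
lemma cofinite_support_meagre :
    IsMeagre {x : ℕ → Bool | {n | x n = true}ᶜ.Finite} := by
  classical
  have hsub : {x : ℕ → Bool | {n | x n = true}ᶜ.Finite}
      ⊆ ⋃ N, {x : ℕ → Bool | ∀ n, N ≤ n → x n = true} := by
    intro x hx
    obtain ⟨N, hN⟩ := hx.bddAbove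
    refine mem_iUnion.mpr ⟨N + 1, fun n hn => ?_⟩
    by_contra hxn
    have : n ≤ N := hN (by simpa using hxn)
    omega
  refine IsMeagre.mono hsub (isMeagre_iUnion fun N => ?_)
  have hclosed : IsClosed {x : ℕ → Bool | ∀ n, N ≤ n → x n = true} := by
    have : {x : ℕ → Bool | ∀ n, N ≤ n → x n = true}
        = ⋂ (n : ℕ) (_ : N ≤ n), (fun x : ℕ → Bool => x n) ⁻¹' {true} := by
      ext x; simp
    rw [this]
    exact isClosed_iInter fun n => isClosed_iInter fun _ =>
      IsClosed.preimage (continuous_apply n) (isClosed_discrete _)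
  refine (hclosed.isNowhereDense_iff.mpr ?_).isMeagre'
  rw [eq_empty_iff_forall_notMem]
  intro x hx
  obtain ⟨I, u, hu, hpi⟩ := isOpen_pi_iff.mp isOpen_interior x hx
  set n' : ℕ := max (I.sup id + 1) N with hn'def
  set y : ℕ → Bool := fun n => if n = n' then false else x n with hydef
  have hy : y ∈ Set.pi (↑I : Set ℕ) u := by
    intro i hi
    have : i ≠ n' := by
      have : i ≤ I.sup id := Finset.le_sup (f := id) hi
      omega
    simp only [hydef, if_neg this]
    exact (hu i hi).2
  have hymem := interior_subset (hpi hy)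
  have : y n' = true := hymem n' (le_max_right _ _)
  simp [hydef] at this

/-- Plewik's inequality `𝔣_ℳ ≤ 𝔡`: given a dominating family `D ⊆ ℕ^ℕ`, there is a family
`H` of at most `|D|` many free filters on `ℕ`, each without the Baire property as a subset
of the Cantor space, whose intersection is meager. -/
theorem filters_without_BP_meager_inter_of_dominating (D : Set (ℕ → ℕ))
    (hdom : ∀ f : ℕ → ℕ, ∃ g ∈ D, {n : ℕ | ¬ f n ≤ g n}.Finite) :
    ∃ H : Set (Filter ℕ),
      Cardinal.mk H ≤ Cardinal.mk D ∧
      (∀ F ∈ H, F.NeBot ∧ F ≤ Filter.cofinite ∧ ¬ HasBaireProperty (filterSet F)) ∧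
      IsMeagre (⋂ F ∈ H, filterSet F) := by
  classical
  refine ⟨Fg '' D, Cardinal.mk_image_le, ?_, ?_⟩
  · rintro F ⟨g, _, rfl⟩
    exact ⟨Fg_neBot g, Fg_le_cofinite g,
      no_BP _ (Fg_neBot g) (Fg_le_cofinite g) (Fg_not_meagre g)⟩
  · refine IsMeagre.mono ?_ cofinite_support_meagre
    intro x hx
    show {n | x n = true}ᶜ.Finite
    by_contra hinf'
    have hinf : {n | x n = true}ᶜ.Infinite := hinf'
    set S : Set ℕ := {n | x n = true} with hSdef
    -- the function to dominate
    set f : ℕ → ℕ := fun n => sInf {m | m ∈ Sᶜ ∧ n ≤ m} + 1 with hfdef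
    have hfspec : ∀ n, ∃ m, m ∈ Sᶜ ∧ n ≤ m ∧ m + 1 ≤ f n := by
      intro n
      have hne : {m | m ∈ Sᶜ ∧ n ≤ m}.Nonempty := by
        obtain ⟨m, hm1, hm2⟩ := hinf.exists_gt n
        exact ⟨m, hm1, le_of_lt hm2⟩
      have hmem := Nat.sInf_mem hne
      exact ⟨sInf {m | m ∈ Sᶜ ∧ n ≤ m}, hmem.1, hmem.2, le_refl _⟩
    obtain ⟨g, hgD, hgfin⟩ := hdom f
    -- x belongs to filterSet (Fg g)
    have hxg : x ∈ filterSet (Fg g) := by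
      have : filterSet (Fg g) ∈ (fun F => filterSet F) '' (Fg '' D) := ⟨Fg g, ⟨g, hgD, rfl⟩, rfl⟩
      exact mem_iInter₂.mp hx (Fg g) ⟨g, hgD, rfl⟩
    have hS : {k | blk g k ⊆ S} ∈ Filter.hyperfilter ℕ := mem_Fg.mp hxg
    have hSinf := hyper_infinite hS
    obtain ⟨N, hN⟩ := hgfin.bddAbove
    obtain ⟨k, hk1, hk2⟩ := hSinf.exists_gt N
    have haN : N < aSeq g k := lt_of_lt_of_le hk2 (le_aSeq g k)
    have hdomk : f (aSeq g k) ≤ g (aSeq g k) := by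
      by_contra hcon
      have : aSeq g k ≤ N := hN hcon
      omega
    obtain ⟨m, hm1, hm2, hm3⟩ := hfspec (aSeq g k)
    have hmlt : m < aSeq g (k + 1) := by
      have := g_aSeq_lt g k
      omega
    have : m ∈ blk g k := ⟨hm2, hmlt⟩
    exact hm1 (hk1 this)
end
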